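/- arXiv:quant-ph/0011052 — 2 statements merged into one kernel-verified Lean document; each statement's English description precedes it below -/
import Mathlib

section
/- No quantum finite state transducer computes the relation R₅ = {(wx, x) : w∈{0,1}*, x∈{0,1}} ⊆ {0,1}*×{0,1}* with an isolated cutpoint. -/
/-!  Quantum finite state transducers (qfst), following
Freivalds & Winter, "Quantum Finite State Transducers". -/

section QFSTdefs

variable {Q Γ₁ Γ₂ : Type*}

/-- A quantum finite state transducer: a finite state set `Q`, input alphabet
`Γ₁` (with implicit begin/end markers `‡`,`$`), output alphabet `Γ₂`, unitary
transition matrices for every letter and for the two markers, output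
functions, an initial state, and disjoint sets of accepting and rejecting
states.  The end-marker unitary carries no amplitude from non-halting states
to outside `acc ∪ rej`. -/
structure QFST (Q Γ₁ Γ₂ : Type*) [Fintype Q] [DecidableEq Q] where
  V : Γ₁ → Matrix Q Q ℂ
  Vbeg : Matrix Q Q ℂ
  Vend : Matrix Q Q ℂ
  out : Γ₁ → Q → List Γ₂
  outBeg : Q → List Γ₂
  outEnd : Q → List Γ₂
  init : Q
  acc : Finset Q
  rej : Finset Q
  acc_disj_rej : Disjoint acc rej
  unitary : ∀ a, V a ∈ Matrix.unitaryGroup Q ℂ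
  unitaryBeg : Vbeg ∈ Matrix.unitaryGroup Q ℂ
  unitaryEnd : Vend ∈ Matrix.unitaryGroup Q ℂ
  endHalts : ∀ q, q ∉ acc → q ∉ rej → ∀ p, p ∉ acc → p ∉ rej → Vend q p = 0

variable [DecidableEq Γ₂] [Fintype Q] [DecidableEq Q]

/-- One computation step, before measurement: starting from the superposition
`ψ` over (non-halting state, output tape content) pairs, every state `q`
writes the word `s.2 q` on the output tape and the unitary `s.1` is applied;
this is the resulting amplitude of the pair `(p, w)`. -/
noncomputable def qStepAmp (s : Matrix Q Q ℂ × (Q → List Γ₂)) (ψ : Q → List Γ₂ → ℂ)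
    (p : Q) (w : List Γ₂) : ℂ :=
  ∑ q, (if s.2 q <:+ w then ψ q (w.take (w.length - (s.2 q).length)) else 0) * s.1 q p

/-- Accumulated acceptance probabilities of a qfst computation: after each
step the orthogonal measurement (non-halting ⊕ accepting ⊕ rejecting) is
performed; amplitude on accepting states is collected (per output word `w`)
into the accumulator `P`, and only the non-halting part of the superposition
survives to the next step. -/
noncomputable def qAccAux (acc non : Finset Q) :
    List (Matrix Q Q ℂ × (Q → List Γ₂)) → (Q → List Γ₂ → ℂ) → (List Γ₂ → ℝ) →
      List Γ₂ → ℝ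
  | [], _, P => P
  | s :: rest, ψ, P =>
      qAccAux acc non rest (fun p w => if p ∈ non then qStepAmp s ψ p w else 0)
        (fun w => P w + ∑ p ∈ acc, ‖qStepAmp s ψ p w‖ ^ 2)

/-- The list of computation steps on input `‡ v $`. -/
def QFST.steps (T : QFST Q Γ₁ Γ₂) (v : List Γ₁) :
    List (Matrix Q Q ℂ × (Q → List Γ₂)) :=
  (T.Vbeg, T.outBeg) :: (v.map fun a => (T.V a, T.out a)) ++ [(T.Vend, T.outEnd)]

/-- `T.prob v w` : the accumulated probability that on input `‡ v $` the
computation accepts, having written exactly `w` on the output tape. -/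
noncomputable def QFST.prob (T : QFST Q Γ₁ Γ₂) (v : List Γ₁) (w : List Γ₂) : ℝ :=
  qAccAux T.acc (Finset.univ \ (T.acc ∪ T.rej)) (T.steps v)
    (fun q u => if q = T.init ∧ u = ([] : List Γ₂) then 1 else 0) (fun _ => 0) w

/-- `T` computes the relation `R` with probability `α`. -/
def QFST.Computes (T : QFST Q Γ₁ Γ₂) (R : Set (List Γ₁ × List Γ₂)) (α : ℝ) : Prop :=
  ∀ v w, ((v, w) ∈ R → α ≤ T.prob v w) ∧ ((v, w) ∉ R → T.prob v w ≤ 1 - α)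

/-- `T` computes the relation `R` with isolated cutpoint `α`. -/
def QFST.ComputesCutpoint (T : QFST Q Γ₁ Γ₂) (R : Set (List Γ₁ × List Γ₂)) (α : ℝ) : Prop :=
  ∃ ε > 0, ∀ v w, ((v, w) ∈ R → α + ε ≤ T.prob v w) ∧ ((v, w) ∉ R → T.prob v w ≤ α - ε)

end QFSTdefs

/-- The relation `R₅ = {(wx, x) : w ∈ {0,1}*, x ∈ {0,1}} ⊆ {0,1}* × {0,1}*`. -/
def R₅ : Set (List (Fin 2) × List (Fin 2)) :=
  {p | ∃ (w : List (Fin 2)) (x : Fin 2), p.1 = w ++ [x] ∧ p.2 = [x]}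


open scoped ComplexConjugate

section ContractionTheory

variable {W : Type*} [NormedAddCommGroup W] [InnerProductSpace ℂ W]

local notation "⟪" x ", " y "⟫" => @inner ℂ _ _ x y

omit [InnerProductSpace ℂ W] in
lemma sq_norm_diff_le {x y : W} :
    |‖x‖^2 - ‖y‖^2| ≤ ‖x - y‖ * (‖x‖ + ‖y‖) := by
  have h1 : ‖x‖ - ‖y‖ ≤ ‖x - y‖ := norm_sub_norm_le x y
  have h2 : ‖y‖ - ‖x‖ ≤ ‖x - y‖ := by
    have := norm_sub_norm_le y x
    rwa [norm_sub_rev] at this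
  rw [abs_le]
  constructor <;> nlinarith [norm_nonneg x, norm_nonneg y, norm_nonneg (x - y)]

lemma inner_pres (S : W →L[ℂ] W) (hS : ∀ φ, ‖S φ‖ ≤ ‖φ‖)
    (u : W) (hu : ‖S u‖ = ‖u‖) (z : W) : ⟪S u, S z⟫ = ⟪u, z⟫ := by
  by_contra hne
  set γ : ℂ := ⟪u, z⟫ - ⟪S u, S z⟫ with hγdef
  have hγ0 : γ ≠ 0 := sub_ne_zero.mpr fun h => hne h.symm
  set d : ℝ := ‖z‖^2 - ‖S z‖^2 with hd_def
  have hd : 0 ≤ d := by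
    have := hS z
    have h0 := norm_nonneg (S z)
    nlinarith
  set s : ℝ := 1/(d+1) with hs_def
  have hspos : 0 < s := by positivity
  set t : ℂ := (-s : ℝ) • conj γ with ht_def
  have hSut : S (u + t • z) = S u + t • S z := by
    rw [map_add, map_smul]
  have hcontr : ‖S (u + t • z)‖^2 ≤ ‖u + t • z‖^2 := by
    have := hS (u + t • z)
    have h0 := norm_nonneg (S (u + t • z))
    nlinarith
  have e1 : ‖u + t • z‖^2 = ‖u‖^2 + 2 * Complex.re (t * ⟪u, z⟫) + ‖t‖^2 * ‖z‖^2 := by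
    rw [@norm_add_sq ℂ, inner_smul_right, norm_smul]
    simp only [RCLike.re_to_complex]
    ring
  have e2 : ‖S u + t • S z‖^2
      = ‖S u‖^2 + 2 * Complex.re (t * ⟪S u, S z⟫) + ‖t‖^2 * ‖S z‖^2 := by
    rw [@norm_add_sq ℂ, inner_smul_right, norm_smul]
    simp only [RCLike.re_to_complex]
    ring
  have hγγ : t * γ = (((-s) * Complex.normSq γ : ℝ) : ℂ) := by
    rw [ht_def, Complex.real_smul]
    push_cast
    rw [mul_assoc, mul_comm ((starRingEnd ℂ) γ) γ, Complex.mul_conj]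
  have hre : Complex.re (t * γ) = -s * ‖γ‖^2 := by
    rw [hγγ, Complex.ofReal_re, Complex.normSq_eq_norm_sq]
  have hnt : ‖t‖^2 = s^2 * ‖γ‖^2 := by
    have h : ‖t‖ = s * ‖γ‖ := by
      rw [ht_def, norm_smul, Real.norm_eq_abs, abs_neg, abs_of_pos hspos, RCLike.norm_conj]
    rw [h]; ring
  have hu2 : ‖S u‖^2 = ‖u‖^2 := by rw [hu]
  have hdd : ‖t‖^2 * d = ‖t‖^2*‖z‖^2 - ‖t‖^2*‖S z‖^2 := by rw [hd_def]; ring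
  have hre_split : Complex.re (t * ⟪u, z⟫) - Complex.re (t * ⟪S u, S z⟫)
      = Complex.re (t * γ) := by
    rw [hγdef, mul_sub, Complex.sub_re]
  have hkey : 0 ≤ 2 * Complex.re (t * γ) + ‖t‖^2 * d := by
    rw [hSut, e1, e2] at hcontr
    linarith
  have hγn : 0 < ‖γ‖^2 := pow_pos (norm_pos_iff.mpr hγ0) 2
  rw [hre, hnt] at hkey
  have hsd : s * d < 1 := by
    rw [hs_def, div_mul_eq_mul_div, one_mul, div_lt_one (by linarith)]
    linarith
  nlinarith [mul_pos hspos hγn, mul_lt_mul_of_pos_right hsd (mul_pos hspos hγn)]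

end ContractionTheory

section ContractionTheory2

variable {W : Type*} [NormedAddCommGroup W] [InnerProductSpace ℂ W]
  [FiniteDimensional ℂ W]

local notation "⟪" x ", " y "⟫" => @inner ℂ _ _ x y

variable (S : W →L[ℂ] W)

/-- iterated contraction bound -/
lemma pow_contr (hS : ∀ φ, ‖S φ‖ ≤ ‖φ‖) : ∀ (n : ℕ) (φ : W), ‖(S^n) φ‖ ≤ ‖φ‖ := by
  intro n
  induction n with
  | zero => intro φ; simp
  | succ n ih =>
    intro φ
    rw [pow_succ]
    exact le_trans (ih (S φ)) (hS φ)

lemma pow_apply_succ (n : ℕ) (φ : W) : (S^(n+1)) φ = (S^n) (S φ) := by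
  rw [pow_succ]; rfl

lemma pow_apply_succ' (n : ℕ) (φ : W) : (S^(n+1)) φ = S ((S^n) φ) := by
  rw [pow_succ']; rfl

lemma pow_contr_mono (hS : ∀ φ, ‖S φ‖ ≤ ‖φ‖) {m n : ℕ} (h : m ≤ n) (φ : W) :
    ‖(S^n) φ‖ ≤ ‖(S^m) φ‖ := by
  obtain ⟨k, rfl⟩ := Nat.exists_eq_add_of_le h
  rw [add_comm, pow_add]
  exact pow_contr S hS k ((S^m) φ)

/-- the eventually-isometric subspace -/
def Esub (hS : ∀ φ, ‖S φ‖ ≤ ‖φ‖) : Submodule ℂ W where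
  carrier := {y | ∀ n, ‖(S^n) y‖ = ‖y‖}
  zero_mem' := by intro n; simp
  smul_mem' := by
    intro c y hy n
    rw [map_smul, norm_smul, norm_smul, hy n]
  add_mem' := by
    intro y z hy hz n
    have ha : ‖(S^n) (y+z)‖ ≤ ‖y+z‖ := pow_contr S hS n _
    have hb : ‖(S^n) (y-z)‖ ≤ ‖y-z‖ := pow_contr S hS n _
    have hpar1 := parallelogram_law_with_norm ℂ ((S^n) y) ((S^n) z)
    have hpar2 := parallelogram_law_with_norm ℂ y z
    rw [← map_add, ← map_sub, hy n, hz n] at hpar1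
    nlinarith [norm_nonneg ((S^n) (y+z)), norm_nonneg (y+z),
      norm_nonneg ((S^n) (y-z)), norm_nonneg (y-z)]

lemma Esub_mem {hS : ∀ φ, ‖S φ‖ ≤ ‖φ‖} {y : W} :
    y ∈ Esub S hS ↔ ∀ n, ‖(S^n) y‖ = ‖y‖ := Iff.rfl

lemma Esub_inv (hS : ∀ φ, ‖S φ‖ ≤ ‖φ‖) {y : W} (hy : y ∈ Esub S hS) :
    S y ∈ Esub S hS := by
  have h1 : ‖S y‖ = ‖y‖ := by have := hy 1; rwa [pow_one] at this
  intro n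
  rw [← pow_apply_succ, hy (n+1), h1]

lemma Esub_norm_S (hS : ∀ φ, ‖S φ‖ ≤ ‖φ‖) {y : W} (hy : y ∈ Esub S hS) :
    ‖S y‖ = ‖y‖ := by
  have := hy 1
  rwa [pow_one] at this

/-- S is surjective on Esub -/
lemma Esub_surj (hS : ∀ φ, ‖S φ‖ ≤ ‖φ‖) {u : W} (hu : u ∈ Esub S hS) :
    ∃ u₀ ∈ Esub S hS, S u₀ = u := by
  classical
  set E := Esub S hS
  let f : E →ₗ[ℂ] E := (S : W →ₗ[ℂ] W).restrict (fun x hx => Esub_inv S hS hx)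
  have hinj : Function.Injective f := by
    rw [← LinearMap.ker_eq_bot]
    rw [LinearMap.ker_eq_bot']
    intro ⟨m, hm⟩ h
    have : S m = 0 := congrArg Subtype.val h
    have h2 : ‖S m‖ = ‖m‖ := Esub_norm_S S hS hm
    rw [this, norm_zero] at h2
    exact Subtype.ext (norm_eq_zero.mp h2.symm)
  have hsurj : Function.Surjective f := (LinearMap.injective_iff_surjective).mp hinj
  obtain ⟨⟨u₀, hu₀⟩, h⟩ := hsurj ⟨u, hu⟩
  exact ⟨u₀, hu₀, congrArg Subtype.val h⟩

lemma Eorth_inv (hS : ∀ φ, ‖S φ‖ ≤ ‖φ‖) {z : W} (hz : z ∈ (Esub S hS)ᗮ) :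
    S z ∈ (Esub S hS)ᗮ := by
  rw [Submodule.mem_orthogonal]
  intro u hu
  obtain ⟨u₀, hu₀, rfl⟩ := Esub_surj S hS hu
  rw [inner_pres S hS u₀ (Esub_norm_S S hS hu₀) z]
  exact (Submodule.mem_orthogonal (Esub S hS) z).mp hz u₀ hu₀

lemma Eorth_pow_mem (hS : ∀ φ, ‖S φ‖ ≤ ‖φ‖) {z : W} (hz : z ∈ (Esub S hS)ᗮ) (n : ℕ) :
    (S^n) z ∈ (Esub S hS)ᗮ := by
  induction n with
  | zero => simpa using hz
  | succ n ih => rw [pow_apply_succ']; exact Eorth_inv S hS ih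

set_option maxHeartbeats 1000000 in
/-- decay on the orthogonal complement -/
lemma Eorth_decay (hS : ∀ φ, ‖S φ‖ ≤ ‖φ‖) {z : W} (hz : z ∈ (Esub S hS)ᗮ) :
    Filter.Tendsto (fun n => ‖(S^n) z‖) Filter.atTop (nhds 0) := by
  haveI : ProperSpace W := FiniteDimensional.proper ℂ W
  set r : ℕ → ℝ := fun n => ‖(S^n) z‖ with hr
  have hanti : Antitone r := antitone_nat_of_succ_le (by
    intro n
    rw [hr]
    simp only
    rw [pow_apply_succ']
    exact hS _)
  have hbdd : BddBelow (Set.range r) := ⟨0, by rintro x ⟨n, rfl⟩; exact norm_nonneg _⟩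
  have htend : Filter.Tendsto r Filter.atTop (nhds (⨅ n, r n)) :=
    tendsto_atTop_ciInf hanti hbdd
  set c := ⨅ n, r n with hc
  have hc0 : 0 ≤ c := le_ciInf (fun n => norm_nonneg _)
  -- the sequence lives in the closed ball of radius ‖z‖
  have hball : ∀ n, (S^n) z ∈ Metric.closedBall (0 : W) ‖z‖ := by
    intro n
    rw [Metric.mem_closedBall, dist_zero_right]
    exact pow_contr S hS n z
  obtain ⟨y, hy, ψ, hψmono, hψtend⟩ :=
    (isCompact_closedBall (0:W) ‖z‖).tendsto_subseq hball
  have hnormy : ‖y‖ = c := by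
    have h1 : Filter.Tendsto (fun k => ‖(S^(ψ k)) z‖) Filter.atTop (nhds ‖y‖) :=
      (continuous_norm.tendsto y).comp hψtend
    have h2 : Filter.Tendsto (fun k => r (ψ k)) Filter.atTop (nhds c) :=
      htend.comp hψmono.tendsto_atTop
    exact tendsto_nhds_unique h1 h2
  have hyE : y ∈ Esub S hS := by
    intro m
    have hcont : Continuous fun w => (S^m) w := (S^m).continuous
    have h1 : Filter.Tendsto (fun k => (S^m) ((S^(ψ k)) z)) Filter.atTop (nhds ((S^m) y)) :=
      (hcont.tendsto y).comp hψtend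
    have heq : ∀ k, (S^m) ((S^(ψ k)) z) = (S^(m + ψ k)) z := by
      intro k; rw [pow_add]; rfl
    have h1' : Filter.Tendsto (fun k => ‖(S^(m + ψ k)) z‖) Filter.atTop (nhds ‖(S^m) y‖) := by
      have := (continuous_norm.tendsto _).comp h1
      exact Filter.Tendsto.congr (fun k => by
        show ‖(S^m) ((S^(ψ k)) z)‖ = ‖(S^(m + ψ k)) z‖; rw [heq]) this
    have h2 : Filter.Tendsto (fun k => r (m + ψ k)) Filter.atTop (nhds c) := by
      apply htend.comp
      exact Filter.tendsto_atTop_mono (fun k => Nat.le_add_left _ m) hψmono.tendsto_atTop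
    have : ‖(S^m) y‖ = c := tendsto_nhds_unique h1' (by simpa [hr] using h2)
    rw [this, hnormy]
  have hyO : y ∈ (Esub S hS)ᗮ := by
    have hclosed : IsClosed ((Esub S hS)ᗮ : Set W) := Submodule.isClosed_orthogonal _
    exact hclosed.mem_of_tendsto hψtend
      (Filter.Eventually.of_forall fun k => Eorth_pow_mem S hS hz (ψ k))
  have hy0 : y = 0 := by
    have := (Submodule.orthogonal_disjoint (Esub S hS)).le_bot ⟨hyE, hyO⟩
    simpa using this
  rw [hy0, norm_zero] at hnormy
  rwa [← hnormy] at htend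

end ContractionTheory2

section ContractionTheory3

variable {W : Type*} [NormedAddCommGroup W] [InnerProductSpace ℂ W]
  [FiniteDimensional ℂ W]

lemma Esub_pow_mem (S : W →L[ℂ] W) (hS : ∀ φ, ‖S φ‖ ≤ ‖φ‖) {y : W}
    (hy : y ∈ Esub S hS) (n : ℕ) : (S^n) y ∈ Esub S hS := by
  induction n with
  | zero => simpa using hy
  | succ n ih => rw [pow_apply_succ']; exact Esub_inv S hS ih

lemma Esub_pow_norm (S : W →L[ℂ] W) (hS : ∀ φ, ‖S φ‖ ≤ ‖φ‖) {y : W}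
    (hy : y ∈ Esub S hS) (n : ℕ) : ‖(S^n) y‖ = ‖y‖ := hy n

theorem contraction_return (S : W →L[ℂ] W) (hS : ∀ φ, ‖S φ‖ ≤ ‖φ‖)
    (x : W) (β : ℝ) (hβ : ∀ n : ℕ, β ≤ ‖(S^n) x‖^2)
    (δ' : ℝ) (hδ' : 0 < δ') :
    ∃ n : ℕ, 1 ≤ n ∧ ‖(S^n) x - x‖ ≤ Real.sqrt (‖x‖^2 - β) + 2*δ' := by
  classical
  haveI : ProperSpace W := FiniteDimensional.proper ℂ W
  set E := Esub S hS with hE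
  set e : W := (E.orthogonalProjectionOnto x : W) with he_def
  set f : W := x - e with hf_def
  have he : e ∈ E := SetLike.coe_mem _
  have hf : f ∈ Eᗮ := Submodule.sub_starProjection_mem_orthogonal (K := E) x
  have hx : x = e + f := by rw [hf_def]; abel
  have hef : (inner ℂ e f : ℂ) = 0 :=
    Submodule.inner_right_of_mem_orthogonal he hf
  have hpyth : ‖x‖^2 = ‖e‖^2 + ‖f‖^2 := by
    rw [hx, @norm_add_sq ℂ, hef]
    simp
  -- decay of f
  have hdecay := Eorth_decay S hS hf
  -- β ≤ ‖e‖²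
  have hβe : β ≤ ‖e‖^2 := by
    have hbound : ∀ n : ℕ, β ≤ (‖e‖ + ‖(S^n) f‖)^2 := by
      intro n
      refine le_trans (hβ n) ?_
      have h1 : ‖(S^n) x‖ ≤ ‖e‖ + ‖(S^n) f‖ := by
        have : (S^n) x = (S^n) e + (S^n) f := by rw [hx, map_add]
        rw [this]
        refine le_trans (norm_add_le _ _) ?_
        rw [Esub_pow_norm S hS he n]
      have h0 := norm_nonneg ((S^n) x)
      nlinarith
    have htend : Filter.Tendsto (fun n => (‖e‖ + ‖(S^n) f‖)^2) Filter.atTop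
        (nhds (‖e‖^2)) := by
      have : Filter.Tendsto (fun n => ‖e‖ + ‖(S^n) f‖) Filter.atTop (nhds (‖e‖ + 0)) :=
        tendsto_const_nhds.add hdecay
      rw [add_zero] at this
      exact this.pow 2
    exact ge_of_tendsto htend (Filter.Eventually.of_forall hbound)
  have hfx : ‖f‖ ≤ Real.sqrt (‖x‖^2 - β) := by
    rw [show ‖f‖ = Real.sqrt (‖f‖^2) by rw [Real.sqrt_sq (norm_nonneg f)]]
    apply Real.sqrt_le_sqrt
    linarith
  -- pick m₀ ≥ 1 with ‖S^m₀ f‖ ≤ δ'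
  obtain ⟨m₁, hm₁⟩ := (Metric.tendsto_atTop.mp hdecay) δ' hδ'
  set m₀ := m₁ + 1 with hm₀
  have hm₀1 : 1 ≤ m₀ := Nat.le_add_left _ _
  have hfm₀ : ‖(S^m₀) f‖ ≤ δ' := by
    have := hm₁ m₀ (Nat.le_succ _)
    rw [Real.dist_eq, sub_zero] at this
    exact le_of_lt (lt_of_abs_lt this)
  -- recurrence on E via compactness
  set a : ℕ → W := fun k => (S^(k*m₀)) e with ha
  have haE : ∀ k, a k ∈ E := fun k => Esub_pow_mem S hS he _
  have haball : ∀ k, a k ∈ Metric.closedBall (0:W) ‖e‖ := by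
    intro k
    rw [Metric.mem_closedBall, dist_zero_right]
    exact pow_contr S hS _ e
  obtain ⟨y, hy, ψ, hψmono, hψtend⟩ :=
    (isCompact_closedBall (0:W) ‖e‖).tendsto_subseq haball
  obtain ⟨N, hN⟩ := (Metric.tendsto_atTop.mp hψtend) (δ'/2) (by linarith)
  have hdist : dist (a (ψ N)) (a (ψ (N+1))) ≤ δ' := by
    have h1 := hN N (le_refl N)
    have h2 := hN (N+1) (Nat.le_succ N)
    have := dist_triangle (a (ψ N)) y (a (ψ (N+1)))
    rw [dist_comm y (a (ψ (N+1)))] at this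
    simp only [Function.comp] at h1 h2
    linarith
  have hψlt : ψ N < ψ (N+1) := hψmono (Nat.lt_succ_self N)
  set n := (ψ (N+1) - ψ N) * m₀ with hn
  have hn1 : 1 ≤ n := by
    have h1 : 1 ≤ ψ (N+1) - ψ N := Nat.le_sub_of_add_le (by omega)
    calc 1 ≤ m₀ := hm₀1
    _ = 1 * m₀ := (one_mul _).symm
    _ ≤ n := Nat.mul_le_mul_right _ h1
  have hm₀n : m₀ ≤ n := by
    calc m₀ = 1 * m₀ := (one_mul _).symm
    _ ≤ n := Nat.mul_le_mul_right _ (Nat.le_sub_of_add_le (by omega))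
  -- ‖Sⁿ e − e‖ ≤ δ'
  have hrecur : ‖(S^n) e - e‖ ≤ δ' := by
    have hmem : (S^n) e - e ∈ E := Submodule.sub_mem E (Esub_pow_mem S hS he n) he
    have heq : ‖(S^(ψ N * m₀)) ((S^n) e - e)‖ = ‖(S^n) e - e‖ :=
      Esub_pow_norm S hS hmem _
    have harith : (S^(ψ N * m₀)) ((S^n) e - e) = a (ψ (N+1)) - a (ψ N) := by
      rw [map_sub, ha]
      simp only
      congr 1
      rw [← ContinuousLinearMap.mul_apply, ← pow_add]
      rw [hn, Nat.sub_mul,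
        Nat.add_sub_cancel' (Nat.mul_le_mul_right _ (Nat.le_of_lt hψlt))]
    rw [← heq, harith, ← dist_eq_norm, dist_comm]
    exact hdist
  have hfn : ‖(S^n) f‖ ≤ δ' := le_trans (pow_contr_mono S hS hm₀n f) hfm₀
  refine ⟨n, hn1, ?_⟩
  have hsplit : (S^n) x - x = ((S^n) e - e) + ((S^n) f - f) := by
    rw [hx, map_add]; abel
  rw [hsplit]
  calc ‖((S^n) e - e) + ((S^n) f - f)‖ ≤ ‖(S^n) e - e‖ + ‖(S^n) f - f‖ := norm_add_le _ _
  _ ≤ δ' + (‖(S^n) f‖ + ‖f‖) := by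
      gcongr
      exact norm_sub_le _ _
  _ ≤ δ' + (δ' + Real.sqrt (‖x‖^2 - β)) := by gcongr
  _ = Real.sqrt (‖x‖^2 - β) + 2*δ' := by ring

end ContractionTheory3


namespace QTaux

variable {Q : Type} [Fintype Q] [DecidableEq Q]

/-- encoding of the three relevant output-tape contents -/
def oenc : Fin 3 → List (Fin 2)
  | 0 => []
  | 1 => [0]
  | 2 => [1]

/-- the tracked state space -/
abbrev Wsp (Q : Type) [Fintype Q] [DecidableEq Q] := EuclideanSpace ℂ (Q × Fin 3)

/-- extension of a tracked vector to a full function on output words -/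
def ext (φ : Wsp Q) : Q → List (Fin 2) → ℂ := fun q u =>
  if u = [] then φ (q, 0) else if u = [0] then φ (q, 1) else if u = [1] then φ (q, 2) else 0

lemma ext_oenc (φ : Wsp Q) (q : Q) (i : Fin 3) : ext φ q (oenc i) = φ (q, i) := by
  fin_cases i <;> simp [ext, oenc]

/-- a mirror of the recursion in `qAccAux` with the accumulator stripped -/
noncomputable def probAux (acc non : Finset Q) :
    List (Matrix Q Q ℂ × (Q → List (Fin 2))) → (Q → List (Fin 2) → ℂ) →
      List (Fin 2) → ℝ
  | [], _, _ => 0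
  | s :: rest, ψ, w =>
      (∑ p ∈ acc, ‖qStepAmp s ψ p w‖ ^ 2) +
        probAux acc non rest (fun p w => if p ∈ non then qStepAmp s ψ p w else 0) w

lemma qAccAux_eq_probAux (acc non : Finset Q)
    (L : List (Matrix Q Q ℂ × (Q → List (Fin 2)))) :
    ∀ (ψ : Q → List (Fin 2) → ℂ) (P : List (Fin 2) → ℝ) (w : List (Fin 2)),
      qAccAux acc non L ψ P w = P w + probAux acc non L ψ w := by
  induction L with
  | nil => intro ψ P w; simp [qAccAux, probAux]
  | cons s rest ih =>
    intro ψ P w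
    rw [qAccAux, probAux, ih]
    ring

lemma qAccAux_nonneg (acc non : Finset Q)
    (L : List (Matrix Q Q ℂ × (Q → List (Fin 2)))) :
    ∀ (ψ : Q → List (Fin 2) → ℂ) (P : List (Fin 2) → ℝ) (w : List (Fin 2)),
      (∀ u, 0 ≤ P u) → 0 ≤ qAccAux acc non L ψ P w := by
  induction L with
  | nil => intro ψ P w hP; exact hP w
  | cons s rest ih =>
    intro ψ P w hP
    rw [qAccAux]
    apply ih
    intro u
    have : (0:ℝ) ≤ ∑ p ∈ acc, ‖qStepAmp s ψ p u‖ ^ 2 := by positivity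
    have := hP u
    positivity

lemma qStepAmp_congr {s : Matrix Q Q ℂ × (Q → List (Fin 2))}
    {ψ ψ' : Q → List (Fin 2) → ℂ} {w : List (Fin 2)}
    (H : ∀ q u, u <+: w → ψ q u = ψ' q u) (p : Q) :
    qStepAmp s ψ p w = qStepAmp s ψ' p w := by
  unfold qStepAmp
  refine Finset.sum_congr rfl (fun q _ => ?_)
  congr 1
  by_cases h : s.2 q <:+ w
  · rw [if_pos h, if_pos h, H _ _ (List.take_prefix _ _)]
  · rw [if_neg h, if_neg h]

lemma probAux_congr (acc non : Finset Q)
    (L : List (Matrix Q Q ℂ × (Q → List (Fin 2)))) :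
    ∀ {ψ ψ' : Q → List (Fin 2) → ℂ} {w : List (Fin 2)},
      (∀ q u, u <+: w → ψ q u = ψ' q u) →
      probAux acc non L ψ w = probAux acc non L ψ' w := by
  induction L with
  | nil => intro ψ ψ' w H; rfl
  | cons s rest ih =>
    intro ψ ψ' w H
    rw [probAux, probAux]
    congr 1
    · refine Finset.sum_congr rfl (fun p _ => ?_)
      rw [qStepAmp_congr H p]
    · apply ih
      intro q u hu
      by_cases hq : q ∈ non
      · simp only [if_pos hq]
        exact qStepAmp_congr (fun q' u' hu' => H q' u' (hu'.trans hu)) q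
      · simp only [if_neg hq]

lemma prefix_singleton {b : Fin 2} {u : List (Fin 2)} (h : u <+: [b]) :
    u = [] ∨ u = [b] := by
  obtain ⟨t, ht⟩ := h
  cases u with
  | nil => exact Or.inl rfl
  | cons y ys =>
    right
    rw [List.cons_append] at ht
    obtain ⟨h1, h2⟩ := List.cons.injEq _ _ _ _ ▸ ht
    obtain ⟨h3, h4⟩ := List.append_eq_nil_iff.mp h2
    rw [h1, h3]

end QTaux

namespace QTaux

variable {Q : Type} [Fintype Q] [DecidableEq Q] (T : QFST Q (Fin 2) (Fin 2))

/-- the non-halting states -/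
def nonS : Finset Q := Finset.univ \ (T.acc ∪ T.rej)

/-- one tracked computation step -/
noncomputable def stepV (s : Matrix Q Q ℂ × (Q → List (Fin 2))) (φ : Wsp Q) : Wsp Q :=
  WithLp.toLp 2 (fun pi : Q × Fin 3 => if pi.1 ∈ nonS T then qStepAmp s (ext φ) pi.1 (oenc pi.2) else 0)

/-- accepting mass at output `[b]` in one step -/
noncomputable def accM (s : Matrix Q Q ℂ × (Q → List (Fin 2))) (φ : Wsp Q) (b : Fin 2) : ℝ :=
  ∑ p ∈ T.acc, ‖qStepAmp s (ext φ) p [b]‖ ^ 2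

/-- tracked version of `probAux` -/
noncomputable def probV : List (Matrix Q Q ℂ × (Q → List (Fin 2))) → Wsp Q → Fin 2 → ℝ
  | [], _, _ => 0
  | s :: rest, φ, b => accM T s φ b + probV rest (stepV T s φ) b

noncomputable def runV (L : List (Matrix Q Q ℂ × (Q → List (Fin 2)))) (φ : Wsp Q) : Wsp Q :=
  L.foldl (fun ψ s => stepV T s ψ) φ

lemma ext_stepV (s : Matrix Q Q ℂ × (Q → List (Fin 2))) (φ : Wsp Q) (q : Q)
    (u : List (Fin 2)) (hu : u = [] ∨ u = [0] ∨ u = [1]) :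
    ext (stepV T s φ) q u = if q ∈ nonS T then qStepAmp s (ext φ) q u else 0 := by
  rcases hu with rfl | rfl | rfl
  · show ext _ q (oenc 0) = _
    rw [ext_oenc]; rfl
  · show ext _ q (oenc 1) = _
    rw [ext_oenc]; rfl
  · show ext _ q (oenc 2) = _
    rw [ext_oenc]; rfl

lemma sim (b : Fin 2) (L : List (Matrix Q Q ℂ × (Q → List (Fin 2)))) :
    ∀ φ : Wsp Q, probAux T.acc (nonS T) L (ext φ) [b] = probV T L φ b := by
  induction L with
  | nil => intro φ; rfl
  | cons s rest ih =>
    intro φ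
    rw [probAux, probV]
    congr 1
    rw [← ih (stepV T s φ)]
    apply probAux_congr
    intro q u hu
    rcases prefix_singleton hu with rfl | rfl
    · rw [ext_stepV T s φ q [] (Or.inl rfl)]
    · rw [ext_stepV T s φ q [b] (by fin_cases b; exact Or.inr (Or.inl rfl); exact Or.inr (Or.inr rfl))]

/-- initial tracked vector -/
noncomputable def phi0 : Wsp Q := WithLp.toLp 2 (fun pi : Q × Fin 3 => if pi.1 = T.init ∧ pi.2 = 0 then 1 else 0)

lemma initial_ext :
    (fun q (u : List (Fin 2)) => if q = T.init ∧ u = ([] : List (Fin 2)) then (1:ℂ) else 0)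
      = ext (phi0 T) := by
  funext q u
  by_cases h0 : u = []
  · subst h0; simp [ext, phi0]
  · by_cases h1 : u = [0]
    · subst h1
      simp [ext, phi0]
    · by_cases h2 : u = [1]
      · subst h2
        simp [ext, phi0]
      · simp [ext, phi0, h0, h1, h2]

def stepOf (a : Fin 2) : Matrix Q Q ℂ × (Q → List (Fin 2)) := (T.V a, T.out a)

noncomputable def rho (v : List (Fin 2)) : Wsp Q :=
  runV T (v.map (stepOf T)) (stepV T (T.Vbeg, T.outBeg) (phi0 T))

noncomputable def base (v : List (Fin 2)) (b : Fin 2) : ℝ :=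
  probV T ((T.Vbeg, T.outBeg) :: v.map (stepOf T)) (phi0 T) b

noncomputable def endM (φ : Wsp Q) (b : Fin 2) : ℝ := accM T (T.Vend, T.outEnd) φ b

lemma probV_append (L₁ L₂ : List (Matrix Q Q ℂ × (Q → List (Fin 2)))) :
    ∀ (φ : Wsp Q) (b : Fin 2),
      probV T (L₁ ++ L₂) φ b = probV T L₁ φ b + probV T L₂ (runV T L₁ φ) b := by
  induction L₁ with
  | nil => intro φ b; rw [List.nil_append, probV, runV]; simp [List.foldl_nil]
  | cons s rest ih =>
    intro φ b
    rw [List.cons_append, probV, probV, ih]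
    rw [runV, runV, List.foldl_cons]
    ring

lemma prob_eq (v : List (Fin 2)) (b : Fin 2) :
    T.prob v [b] = base T v b + endM T (rho T v) b := by
  rw [QFST.prob, qAccAux_eq_probAux, initial_ext,
    show Finset.univ \ (T.acc ∪ T.rej) = nonS T from rfl]
  have hsteps : T.steps v
      = ((T.Vbeg, T.outBeg) :: v.map (stepOf T)) ++ [(T.Vend, T.outEnd)] := by
    rfl
  rw [hsteps, sim, probV_append]
  have h1 : probV T [(T.Vend, T.outEnd)] (runV T ((T.Vbeg, T.outBeg) :: v.map (stepOf T)) (phi0 T)) b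
      = endM T (rho T v) b := by
    rw [probV, probV]
    have : runV T ((T.Vbeg, T.outBeg) :: v.map (stepOf T)) (phi0 T) = rho T v := by
      rw [runV, List.foldl_cons, rho, runV]
    rw [this, endM]
    ring
  rw [h1, base]
  ring

end QTaux

namespace QTaux

open scoped ComplexConjugate

variable {Q : Type} [Fintype Q] [DecidableEq Q]

lemma norm_sq_eq (ψ : Wsp Q) : ‖ψ‖^2 = ∑ pi : Q × Fin 3, ‖ψ pi‖^2 := by
  rw [EuclideanSpace.norm_eq, Real.sq_sqrt (by positivity)]

lemma complex_norm_sq_re (z : ℂ) : ‖z‖^2 = (z * conj z).re := by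
  rw [Complex.mul_conj, Complex.ofReal_re, Complex.normSq_eq_norm_sq]

lemma vecMul_norm (V : Matrix Q Q ℂ) (hV : V ∈ Matrix.unitaryGroup Q ℂ) (c : Q → ℂ) :
    ∑ p, ‖∑ q, c q * V q p‖^2 = ∑ q, ‖c q‖^2 := by
  have hVV : ∀ q q', ∑ p, V q p * conj (V q' p) = if q = q' then 1 else 0 := by
    intro q q'
    have h := Matrix.mem_unitaryGroup_iff.mp hV
    have h2 : (V * star V) q q' = (1 : Matrix Q Q ℂ) q q' := by rw [h]
    rw [Matrix.mul_apply, Matrix.one_apply] at h2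
    rw [← h2]
    refine Finset.sum_congr rfl (fun p _ => ?_)
    rw [Matrix.star_apply]
    rfl
  have key : ∑ p, ((∑ q, c q * V q p) * conj (∑ q', c q' * V q' p))
      = ∑ q, c q * conj (c q) := by
    have expand : ∀ p, (∑ q, c q * V q p) * conj (∑ q', c q' * V q' p)
        = ∑ q, ∑ q', (c q * conj (c q')) * (V q p * conj (V q' p)) := by
      intro p
      rw [map_sum, Finset.sum_mul_sum]
      refine Finset.sum_congr rfl (fun q _ => Finset.sum_congr rfl (fun q' _ => ?_))
      rw [map_mul]
      ring
    calc ∑ p, ((∑ q, c q * V q p) * conj (∑ q', c q' * V q' p))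
        = ∑ p, ∑ q, ∑ q', (c q * conj (c q')) * (V q p * conj (V q' p)) :=
          Finset.sum_congr rfl (fun p _ => expand p)
      _ = ∑ q, ∑ q', (c q * conj (c q')) * ∑ p, (V q p * conj (V q' p)) := by
          rw [Finset.sum_comm]
          refine Finset.sum_congr rfl (fun q _ => ?_)
          rw [Finset.sum_comm]
          refine Finset.sum_congr rfl (fun q' _ => ?_)
          rw [Finset.mul_sum]
      _ = ∑ q, c q * conj (c q) := by
          refine Finset.sum_congr rfl (fun q _ => ?_)
          rw [Finset.sum_eq_single q]
          · rw [hVV q q, if_pos rfl, mul_one]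
          · intro q' _ hq'
            rw [hVV q q', if_neg (Ne.symm hq'), mul_zero]
          · intro h; exact absurd (Finset.mem_univ q) h
  calc ∑ p, ‖∑ q, c q * V q p‖^2
      = ∑ p, ((∑ q, c q * V q p) * conj (∑ q, c q * V q p)).re :=
        Finset.sum_congr rfl (fun p _ => complex_norm_sq_re _)
    _ = (∑ p, ((∑ q, c q * V q p) * conj (∑ q', c q' * V q' p))).re := by
        rw [Complex.re_sum]
    _ = (∑ q, c q * conj (c q)).re := by rw [key]
    _ = ∑ q, ‖c q‖^2 := by
        rw [Complex.re_sum]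
        exact Finset.sum_congr rfl (fun q _ => (complex_norm_sq_re _).symm)

lemma ext_take_sum (φ : Wsp Q) (l : List (Fin 2)) (q : Q) :
    ∑ i : Fin 3, ‖(if l <:+ oenc i then ext φ q ((oenc i).take ((oenc i).length - l.length)) else 0)‖^2
      ≤ ∑ i : Fin 3, ‖φ (q, i)‖^2 := by
  rcases l with _ | ⟨y, _ | ⟨z, t⟩⟩
  · apply le_of_eq
    refine Finset.sum_congr rfl (fun i _ => ?_)
    rw [if_pos List.nil_suffix]
    simp only [List.length_nil, Nat.sub_zero, List.take_length]
    rw [ext_oenc]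
  · have key : ∀ i : Fin 3,
        (if [y] <:+ oenc i then ext φ q ((oenc i).take ((oenc i).length - 1)) else 0)
          = if oenc i = [y] then φ (q, 0) else 0 := by
      intro i
      fin_cases i <;> fin_cases y <;>
        simp [oenc, ext, List.suffix_cons_iff, List.suffix_nil]
    calc ∑ i : Fin 3, ‖(if [y] <:+ oenc i then ext φ q ((oenc i).take ((oenc i).length - 1)) else 0)‖^2
        = ∑ i : Fin 3, ‖(if oenc i = [y] then φ (q, 0) else 0)‖^2 := by
          refine Finset.sum_congr rfl (fun i _ => ?_)
          rw [key i]
      _ ≤ ∑ i : Fin 3, ‖φ (q, i)‖^2 := by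
          fin_cases y <;>
            simp [Fin.sum_univ_three, oenc] <;>
            nlinarith [sq_nonneg ‖φ (q,0)‖, sq_nonneg ‖φ (q,1)‖,
              sq_nonneg ‖φ (q,2)‖]
  · have key : ∀ i : Fin 3, ¬ (y :: z :: t <:+ oenc i) := by
      intro i h
      have := h.length_le
      fin_cases i <;> simp [oenc] at this <;> omega
    calc ∑ i : Fin 3, ‖(if y :: z :: t <:+ oenc i then ext φ q ((oenc i).take ((oenc i).length - (y :: z :: t).length)) else 0)‖^2
        = 0 := by
          refine Finset.sum_eq_zero (fun i _ => ?_)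
          rw [if_neg (key i)]
          simp
      _ ≤ _ := by positivity

set_option maxHeartbeats 1000000 in
lemma core_ineq (s : Matrix Q Q ℂ × (Q → List (Fin 2)))
    (hU : s.1 ∈ Matrix.unitaryGroup Q ℂ) (φ : Wsp Q) :
    ∑ pi : Q × Fin 3, ‖qStepAmp s (ext φ) pi.1 (oenc pi.2)‖^2
      ≤ ∑ pi : Q × Fin 3, ‖φ pi‖^2 := by
  have swap : ∑ pi : Q × Fin 3, ‖qStepAmp s (ext φ) pi.1 (oenc pi.2)‖^2
      = ∑ i : Fin 3, ∑ p, ‖qStepAmp s (ext φ) p (oenc i)‖^2 := by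
    rw [Fintype.sum_prod_type, Finset.sum_comm]
  rw [swap]
  have inner : ∀ i : Fin 3, ∑ p, ‖qStepAmp s (ext φ) p (oenc i)‖^2
      = ∑ q, ‖(if s.2 q <:+ oenc i then ext φ q ((oenc i).take ((oenc i).length - (s.2 q).length)) else 0)‖^2 := by
    intro i
    simp only [qStepAmp]
    exact vecMul_norm s.1 hU _
  calc ∑ i : Fin 3, ∑ p, ‖qStepAmp s (ext φ) p (oenc i)‖^2
      = ∑ i : Fin 3, ∑ q, ‖(if s.2 q <:+ oenc i then ext φ q ((oenc i).take ((oenc i).length - (s.2 q).length)) else 0)‖^2 :=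
        Finset.sum_congr rfl (fun i _ => inner i)
    _ = ∑ q, ∑ i : Fin 3, ‖(if s.2 q <:+ oenc i then ext φ q ((oenc i).take ((oenc i).length - (s.2 q).length)) else 0)‖^2 :=
        Finset.sum_comm
    _ ≤ ∑ q, ∑ i : Fin 3, ‖φ (q, i)‖^2 :=
        Finset.sum_le_sum (fun q _ => ext_take_sum φ (s.2 q) q)
    _ = ∑ pi : Q × Fin 3, ‖φ pi‖^2 := by rw [Fintype.sum_prod_type]

end QTaux

namespace QTaux

variable {Q : Type} [Fintype Q] [DecidableEq Q] (T : QFST Q (Fin 2) (Fin 2))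

/-- index of the output `[b]` -/
def ib (b : Fin 2) : Fin 3 := if b = 0 then 1 else 2

lemma oenc_ib (b : Fin 2) : oenc (ib b) = [b] := by
  fin_cases b <;> rfl

lemma accM_nonneg (s : Matrix Q Q ℂ × (Q → List (Fin 2))) (φ : Wsp Q) (b : Fin 2) :
    0 ≤ accM T s φ b := by
  unfold accM; positivity

lemma probV_nonneg (L : List (Matrix Q Q ℂ × (Q → List (Fin 2)))) :
    ∀ (φ : Wsp Q) (b : Fin 2), 0 ≤ probV T L φ b := by
  induction L with
  | nil => intro φ b; exact le_refl 0
  | cons s rest ih =>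
    intro φ b
    rw [probV]
    have := accM_nonneg T s φ b
    have := ih (stepV T s φ) b
    linarith

set_option maxHeartbeats 1000000 in
lemma step_account (s : Matrix Q Q ℂ × (Q → List (Fin 2)))
    (hU : s.1 ∈ Matrix.unitaryGroup Q ℂ) (φ : Wsp Q) :
    ‖stepV T s φ‖^2 + accM T s φ 0 + accM T s φ 1 ≤ ‖φ‖^2 := by
  rw [norm_sq_eq, norm_sq_eq]
  set g : Q → Fin 3 → ℝ := fun p i => ‖qStepAmp s (ext φ) p (oenc i)‖^2 with hg
  have hgnonneg : ∀ p i, 0 ≤ g p i := by intro p i; rw [hg]; positivity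
  have hstep : ∑ pi : Q × Fin 3, ‖stepV T s φ pi‖^2 = ∑ p ∈ nonS T, ∑ i : Fin 3, g p i := by
    rw [Fintype.sum_prod_type]
    have h1 : ∀ p : Q, ∑ i : Fin 3, ‖stepV T s φ (p, i)‖^2
        = if p ∈ nonS T then ∑ i : Fin 3, g p i else 0 := by
      intro p
      by_cases hp : p ∈ nonS T
      · rw [if_pos hp]
        refine Finset.sum_congr rfl (fun i _ => ?_)
        rw [stepV]
        simp only [PiLp.toLp_apply, if_pos hp]
        rfl
      · rw [if_neg hp]
        refine Finset.sum_eq_zero (fun i _ => ?_)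
        rw [stepV]
        simp only [PiLp.toLp_apply, if_neg hp]
        simp
    rw [Finset.sum_congr rfl (fun p _ => h1 p)]
    rw [Finset.sum_ite_mem]
    congr 1
    simp
  have haccM : ∀ b : Fin 2, accM T s φ b = ∑ p ∈ T.acc, g p (ib b) := by
    intro b
    rw [accM]
    refine Finset.sum_congr rfl (fun p _ => ?_)
    rw [hg]
    simp only
    rw [oenc_ib]
  have htot : ∑ p, ∑ i : Fin 3, g p i ≤ ∑ pi : Q × Fin 3, ‖φ pi‖^2 := by
    have := core_ineq s hU φ
    rw [Fintype.sum_prod_type] at this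
    exact this
  have hpart : ∑ p, ∑ i : Fin 3, g p i
      = (∑ p ∈ nonS T, ∑ i : Fin 3, g p i) + ((∑ p ∈ T.acc, ∑ i : Fin 3, g p i)
        + (∑ p ∈ T.rej, ∑ i : Fin 3, g p i)) := by
    rw [← Finset.sum_union T.acc_disj_rej]
    rw [nonS, ← Finset.sum_sdiff (Finset.subset_univ (T.acc ∪ T.rej))]
  have hacc2 : (∑ p ∈ T.acc, g p (ib 0)) + (∑ p ∈ T.acc, g p (ib 1))
      ≤ ∑ p ∈ T.acc, ∑ i : Fin 3, g p i := by
    rw [← Finset.sum_add_distrib]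
    refine Finset.sum_le_sum (fun p _ => ?_)
    have : ∑ i : Fin 3, g p i = g p 0 + g p 1 + g p 2 := Fin.sum_univ_three _
    rw [this, show ib 0 = 1 from rfl, show ib 1 = 2 from rfl]
    have := hgnonneg p 0
    linarith
  have hrej : 0 ≤ ∑ p ∈ T.rej, ∑ i : Fin 3, g p i :=
    Finset.sum_nonneg (fun p _ => Finset.sum_nonneg (fun i _ => hgnonneg p i))
  rw [hstep, haccM 0, haccM 1]
  linarith

lemma stepV_norm_le (s : Matrix Q Q ℂ × (Q → List (Fin 2)))
    (hU : s.1 ∈ Matrix.unitaryGroup Q ℂ) (φ : Wsp Q) :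
    ‖stepV T s φ‖ ≤ ‖φ‖ := by
  have h := step_account T s hU φ
  have h0 := accM_nonneg T s φ 0
  have h1 := accM_nonneg T s φ 1
  have h2 : ‖stepV T s φ‖^2 ≤ ‖φ‖^2 := by linarith
  calc ‖stepV T s φ‖ = Real.sqrt (‖stepV T s φ‖^2) := (Real.sqrt_sq (norm_nonneg _)).symm
  _ ≤ Real.sqrt (‖φ‖^2) := Real.sqrt_le_sqrt h2
  _ = ‖φ‖ := Real.sqrt_sq (norm_nonneg _)

end QTaux

namespace QTaux

variable {Q : Type} [Fintype Q] [DecidableEq Q] (T : QFST Q (Fin 2) (Fin 2))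

lemma ext_add (φ φ' : Wsp Q) (q : Q) (u : List (Fin 2)) :
    ext (φ + φ') q u = ext φ q u + ext φ' q u := by
  unfold ext
  split_ifs <;> simp [PiLp.add_apply]

lemma ext_smul (c : ℂ) (φ : Wsp Q) (q : Q) (u : List (Fin 2)) :
    ext (c • φ) q u = c * ext φ q u := by
  unfold ext
  split_ifs <;> simp [PiLp.smul_apply, smul_eq_mul]

lemma ext_sub (φ φ' : Wsp Q) (q : Q) (u : List (Fin 2)) :
    ext (φ - φ') q u = ext φ q u - ext φ' q u := by
  unfold ext
  split_ifs <;> simp [PiLp.sub_apply]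

lemma qStepAmp_ext_add (s : Matrix Q Q ℂ × (Q → List (Fin 2))) (φ φ' : Wsp Q)
    (p : Q) (w : List (Fin 2)) :
    qStepAmp s (ext (φ + φ')) p w = qStepAmp s (ext φ) p w + qStepAmp s (ext φ') p w := by
  unfold qStepAmp
  rw [← Finset.sum_add_distrib]
  refine Finset.sum_congr rfl (fun q _ => ?_)
  by_cases h : s.2 q <:+ w
  · rw [if_pos h, if_pos h, if_pos h, ext_add]; ring
  · rw [if_neg h, if_neg h, if_neg h]; ring

lemma qStepAmp_ext_smul (s : Matrix Q Q ℂ × (Q → List (Fin 2))) (c : ℂ) (φ : Wsp Q)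
    (p : Q) (w : List (Fin 2)) :
    qStepAmp s (ext (c • φ)) p w = c * qStepAmp s (ext φ) p w := by
  unfold qStepAmp
  rw [Finset.mul_sum]
  refine Finset.sum_congr rfl (fun q _ => ?_)
  by_cases h : s.2 q <:+ w
  · rw [if_pos h, if_pos h, ext_smul]; ring
  · rw [if_neg h, if_neg h]; ring

lemma qStepAmp_ext_sub (s : Matrix Q Q ℂ × (Q → List (Fin 2))) (φ φ' : Wsp Q)
    (p : Q) (w : List (Fin 2)) :
    qStepAmp s (ext (φ - φ')) p w = qStepAmp s (ext φ) p w - qStepAmp s (ext φ') p w := by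
  unfold qStepAmp
  rw [← Finset.sum_sub_distrib]
  refine Finset.sum_congr rfl (fun q _ => ?_)
  by_cases h : s.2 q <:+ w
  · rw [if_pos h, if_pos h, if_pos h, ext_sub]; ring
  · rw [if_neg h, if_neg h, if_neg h]; ring

lemma stepV_add (s : Matrix Q Q ℂ × (Q → List (Fin 2))) (φ φ' : Wsp Q) :
    stepV T s (φ + φ') = stepV T s φ + stepV T s φ' := by
  refine PiLp.ext (fun pi => ?_)
  rw [PiLp.add_apply]
  unfold stepV
  simp only [PiLp.toLp_apply]
  by_cases h : pi.1 ∈ nonS T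
  · rw [if_pos h, if_pos h, if_pos h, qStepAmp_ext_add]
  · rw [if_neg h, if_neg h, if_neg h, add_zero]

lemma stepV_smul (s : Matrix Q Q ℂ × (Q → List (Fin 2))) (c : ℂ) (φ : Wsp Q) :
    stepV T s (c • φ) = c • stepV T s φ := by
  refine PiLp.ext (fun pi => ?_)
  rw [PiLp.smul_apply, smul_eq_mul]
  unfold stepV
  simp only [PiLp.toLp_apply]
  by_cases h : pi.1 ∈ nonS T
  · rw [if_pos h, if_pos h, qStepAmp_ext_smul]
  · rw [if_neg h, if_neg h, mul_zero]

/-- the `read 0` operator as a continuous linear map -/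
noncomputable def Sop : Wsp Q →L[ℂ] Wsp Q :=
  LinearMap.toContinuousLinearMap
    { toFun := stepV T (stepOf T 0)
      map_add' := stepV_add T (stepOf T 0)
      map_smul' := stepV_smul T (stepOf T 0) }

lemma Sop_apply (φ : Wsp Q) : Sop T φ = stepV T (stepOf T 0) φ := rfl

lemma Sop_contr : ∀ φ : Wsp Q, ‖Sop T φ‖ ≤ ‖φ‖ := by
  intro φ
  rw [Sop_apply]
  exact stepV_norm_le T (stepOf T 0) (T.unitary 0) φ

lemma rho_append_singleton (v : List (Fin 2)) (a : Fin 2) :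
    rho T (v ++ [a]) = stepV T (stepOf T a) (rho T v) := by
  rw [rho, rho, List.map_append, runV, runV, List.foldl_append]
  rfl

lemma rho_replicate (v : List (Fin 2)) (n : ℕ) :
    rho T (v ++ List.replicate n 0) = ((Sop T)^n) (rho T v) := by
  induction n with
  | zero => simp
  | succ n ih =>
    rw [List.replicate_succ', ← List.append_assoc, rho_append_singleton, ih,
      pow_apply_succ']
    rfl

lemma base_append_singleton (v : List (Fin 2)) (a : Fin 2) (b : Fin 2) :
    base T (v ++ [a]) b = base T v b + accM T (stepOf T a) (rho T v) b := by
  rw [base, base]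
  have h : ((T.Vbeg, T.outBeg) :: (v ++ [a]).map (stepOf T))
      = ((T.Vbeg, T.outBeg) :: v.map (stepOf T)) ++ [stepOf T a] := by
    simp
  rw [h, probV_append]
  have h2 : runV T ((T.Vbeg, T.outBeg) :: v.map (stepOf T)) (phi0 T) = rho T v := by
    rw [runV, List.foldl_cons, rho, runV]
  rw [h2,
    show probV T [stepOf T a] (rho T v) b = accM T (stepOf T a) (rho T v) b
      + probV T ([] : List (Matrix Q Q ℂ × (Q → List (Fin 2)))) (stepV T (stepOf T a) (rho T v)) b from rfl,
    show probV T ([] : List (Matrix Q Q ℂ × (Q → List (Fin 2)))) (stepV T (stepOf T a) (rho T v)) b = 0 from rfl]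
  ring

lemma base_nonneg (v : List (Fin 2)) (b : Fin 2) : 0 ≤ base T v b :=
  probV_nonneg T _ _ _

lemma base_mono (v u : List (Fin 2)) (b : Fin 2) : base T v b ≤ base T (v ++ u) b := by
  induction u generalizing v with
  | nil => simp
  | cons a u ih =>
    have h : v ++ a :: u = (v ++ [a]) ++ u := by simp
    rw [h]
    refine le_trans ?_ (ih (v ++ [a]))
    rw [base_append_singleton]
    have := accM_nonneg T (stepOf T a) (rho T v) b
    linarith

/-- the total bookkeeping quantity is non-increasing -/
lemma M_mono (v u : List (Fin 2)) :
    base T (v ++ u) 0 + base T (v ++ u) 1 + ‖rho T (v ++ u)‖^2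
      ≤ base T v 0 + base T v 1 + ‖rho T v‖^2 := by
  induction u generalizing v with
  | nil => simp
  | cons a u ih =>
    have h : v ++ a :: u = (v ++ [a]) ++ u := by simp
    rw [h]
    refine le_trans (ih (v ++ [a])) ?_
    rw [base_append_singleton, base_append_singleton, rho_append_singleton]
    have hacct := step_account T (stepOf T a) (T.unitary a) (rho T v)
    have h0' : accM T (stepOf T a) (rho T v) 0 + accM T (stepOf T a) (rho T v) 1
        + ‖stepV T (stepOf T a) (rho T v)‖^2 ≤ ‖rho T v‖^2 := by linarith
    linarith

lemma rho_norm_mono (v u : List (Fin 2)) : ‖rho T (v ++ u)‖ ≤ ‖rho T v‖ := by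
  induction u generalizing v with
  | nil => simp
  | cons a u ih =>
    have h : v ++ a :: u = (v ++ [a]) ++ u := by simp
    rw [h]
    refine le_trans (ih (v ++ [a])) ?_
    rw [rho_append_singleton]
    exact stepV_norm_le T (stepOf T a) (T.unitary a) (rho T v)

set_option maxHeartbeats 1000000 in
lemma phi0_norm : ‖phi0 (Q := Q) T‖^2 = 1 := by
  rw [norm_sq_eq]
  have h : ∀ pi : Q × Fin 3, ‖phi0 T pi‖^2 = if pi = (T.init, 0) then 1 else 0 := by
    intro pi
    rw [phi0]
    simp only [PiLp.toLp_apply]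
    by_cases h : pi.1 = T.init ∧ pi.2 = 0
    · rw [if_pos h, if_pos (Prod.ext_iff.mpr h)]
      simp
    · rw [if_neg h, if_neg (fun hh => h (Prod.ext_iff.mp hh))]
      simp
  rw [Finset.sum_congr rfl (fun pi _ => h pi), Finset.sum_ite_eq' Finset.univ (T.init, (0:Fin 3))]
  simp

set_option maxHeartbeats 1000000 in
lemma rho_norm_le_one (v : List (Fin 2)) : ‖rho T v‖ ≤ 1 := by
  have h1 : ‖rho T ([] ++ v)‖ ≤ ‖rho T []‖ := rho_norm_mono T [] v
  rw [List.nil_append] at h1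
  refine le_trans h1 ?_
  have h2 : rho T [] = stepV T (T.Vbeg, T.outBeg) (phi0 T) := by
    rw [rho, runV]
    rfl
  rw [h2]
  refine le_trans (stepV_norm_le T _ T.unitaryBeg _) ?_
  have := phi0_norm (Q := Q) T
  nlinarith [norm_nonneg (phi0 (Q := Q) T)]

end QTaux

namespace QTaux

variable {Q : Type} [Fintype Q] [DecidableEq Q] (T : QFST Q (Fin 2) (Fin 2))

noncomputable def vend (φ : Wsp Q) (b : Fin 2) : EuclideanSpace ℂ {p // p ∈ T.acc} :=
  WithLp.toLp 2 (fun p : {p // p ∈ T.acc} => qStepAmp (T.Vend, T.outEnd) (ext φ) p.1 [b])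

set_option maxHeartbeats 2000000 in
lemma vend_norm_sq (φ : Wsp Q) (b : Fin 2) : ‖vend T φ b‖^2 = endM T φ b := by
  rw [EuclideanSpace.norm_eq, Real.sq_sqrt (by positivity), endM, accM]
  rw [← Finset.sum_coe_sort T.acc (fun p => ‖qStepAmp (T.Vend, T.outEnd) (ext φ) p [b]‖^2)]
  rfl

set_option maxHeartbeats 2000000 in
lemma vend_bound (φ : Wsp Q) (b : Fin 2) : ‖vend T φ b‖ ≤ ‖φ‖ := by
  have h1 : ‖vend T φ b‖^2 ≤ ‖φ‖^2 := by
    rw [vend_norm_sq, endM, accM]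
    calc ∑ p ∈ T.acc, ‖qStepAmp (T.Vend, T.outEnd) (ext φ) p [b]‖^2
        = ∑ p ∈ T.acc, ‖qStepAmp (T.Vend, T.outEnd) (ext φ) p (oenc (ib b))‖^2 := by
          rw [oenc_ib]
      _ ≤ ∑ p, ‖qStepAmp (T.Vend, T.outEnd) (ext φ) p (oenc (ib b))‖^2 :=
          Finset.sum_le_univ_sum_of_nonneg (fun p => by positivity)
      _ ≤ ∑ p, ∑ i : Fin 3, ‖qStepAmp (T.Vend, T.outEnd) (ext φ) p (oenc i)‖^2 :=
          Finset.sum_le_sum (fun p _ =>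
            Finset.single_le_sum (f := fun i => ‖qStepAmp (T.Vend, T.outEnd) (ext φ) p (oenc i)‖^2)
              (fun i _ => by positivity) (Finset.mem_univ (ib b)))
      _ = ∑ pi : Q × Fin 3, ‖qStepAmp (T.Vend, T.outEnd) (ext φ) pi.1 (oenc pi.2)‖^2 := by
          rw [Fintype.sum_prod_type]
      _ ≤ ∑ pi : Q × Fin 3, ‖φ pi‖^2 := core_ineq _ T.unitaryEnd φ
      _ = ‖φ‖^2 := (norm_sq_eq φ).symm
  calc ‖vend T φ b‖ = Real.sqrt (‖vend T φ b‖^2) := (Real.sqrt_sq (norm_nonneg _)).symm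
  _ ≤ Real.sqrt (‖φ‖^2) := Real.sqrt_le_sqrt h1
  _ = ‖φ‖ := Real.sqrt_sq (norm_nonneg _)

set_option maxHeartbeats 2000000 in
lemma vend_sub (φ φ' : Wsp Q) (b : Fin 2) :
    vend T φ b - vend T φ' b = vend T (φ - φ') b := by
  refine PiLp.ext (fun p => ?_)
  rw [PiLp.sub_apply]
  unfold vend
  simp only [PiLp.toLp_apply]
  rw [qStepAmp_ext_sub]

set_option maxHeartbeats 2000000 in
lemma endM_lip (φ φ' : Wsp Q) (b : Fin 2) :
    |endM T φ b - endM T φ' b| ≤ (‖φ‖ + ‖φ'‖) * ‖φ - φ'‖ := by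
  rw [← vend_norm_sq, ← vend_norm_sq]
  refine le_trans sq_norm_diff_le ?_
  rw [mul_comm]
  have h1 : ‖vend T φ b - vend T φ' b‖ ≤ ‖φ - φ'‖ := by
    rw [vend_sub]
    exact vend_bound T _ b
  have h2 : ‖vend T φ b‖ + ‖vend T φ' b‖ ≤ ‖φ‖ + ‖φ'‖ :=
    add_le_add (vend_bound T φ b) (vend_bound T φ' b)
  have := norm_nonneg (vend T φ b - vend T φ' b)
  have := norm_nonneg (vend T φ b)
  have := norm_nonneg (vend T φ' b)
  have h3 : (0:ℝ) ≤ ‖φ‖ + ‖φ'‖ := by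
    have := norm_nonneg φ; have := norm_nonneg φ'; linarith
  nlinarith

end QTaux

set_option maxHeartbeats 1000000 in
theorem no_qfst_computes_R₅_cutpoint' (Q : Type) [Fintype Q] [DecidableEq Q]
    (T : QFST Q (Fin 2) (Fin 2)) (α : ℝ) (h0 : 0 < α) (h1 : α < 1) :
    ¬ T.ComputesCutpoint R₅ α := by
  rintro ⟨ε, hε, hC⟩
  -- ε ≤ α since some probability is ≥ 0 and ≤ α - ε
  have hnil : ((([]: List (Fin 2)), ([]: List (Fin 2))) ∉ R₅) := by
    rintro ⟨w, x, hw, hx⟩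
    exact (List.cons_ne_nil x []) hx.symm
  have hpn : 0 ≤ T.prob [] [] := by
    rw [QFST.prob]
    exact QTaux.qAccAux_nonneg _ _ _ _ _ _ (fun u => le_refl 0)
  have hεα : ε ≤ α := by
    have h := (hC [] []).2 hnil
    linarith
  set δ : ℝ := (ε/4)^2 with hδdef
  have hδ : 0 < δ := by positivity
  set S : Set ℝ := Set.range (fun v : List (Fin 2) => ‖QTaux.rho T v‖^2) with hS
  have hne : S.Nonempty := ⟨_, ⟨[], rfl⟩⟩
  have hbdd : BddBelow S := ⟨0, by rintro r ⟨v, rfl⟩; positivity⟩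
  set β : ℝ := sInf S with hβdef
  have hβle : ∀ v : List (Fin 2), β ≤ ‖QTaux.rho T v‖^2 :=
    fun v => csInf_le hbdd ⟨v, rfl⟩
  obtain ⟨r, ⟨w, rfl⟩, hw⟩ := (csInf_lt_iff hbdd hne).mp
    (lt_add_of_pos_right β hδ)
  set v₁ : List (Fin 2) := w ++ [1] with hv₁def
  set x : QTaux.Wsp Q := QTaux.rho T v₁ with hxdef
  have hw' : ‖QTaux.rho T w‖^2 < β + δ := hw
  have hx_le : ‖x‖^2 ≤ β + δ := by
    rw [hxdef]
    have hmono : ‖QTaux.rho T v₁‖ ≤ ‖QTaux.rho T w‖ := QTaux.rho_norm_mono T w [1]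
    have h0' := norm_nonneg (QTaux.rho T v₁)
    have h1' := norm_nonneg (QTaux.rho T w)
    nlinarith
  have hβn : ∀ n : ℕ, β ≤ ‖((QTaux.Sop T)^n) x‖^2 := by
    intro n
    rw [hxdef, ← QTaux.rho_replicate]
    exact hβle _
  obtain ⟨n, hn1, hclose⟩ := contraction_return (QTaux.Sop T) (QTaux.Sop_contr T)
    x β hβn (ε/8) (by positivity)
  have hsqrt : Real.sqrt (‖x‖^2 - β) ≤ ε/4 := by
    have hle : ‖x‖^2 - β ≤ δ := by linarith
    calc Real.sqrt (‖x‖^2 - β) ≤ Real.sqrt δ := Real.sqrt_le_sqrt hle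
    _ = ε/4 := by rw [hδdef, Real.sqrt_sq (by positivity)]
  have hclose' : ‖((QTaux.Sop T)^n) x - x‖ ≤ ε/2 := by linarith
  set v₂ : List (Fin 2) := v₁ ++ List.replicate n 0 with hv₂def
  have hrho2 : QTaux.rho T v₂ = ((QTaux.Sop T)^n) x := by
    rw [hv₂def, QTaux.rho_replicate, hxdef]
  -- relation facts
  have hmem : (v₂, [(0 : Fin 2)]) ∈ R₅ := by
    obtain ⟨m, rfl⟩ : ∃ m, n = m + 1 := ⟨n - 1, by omega⟩
    refine ⟨v₁ ++ List.replicate m 0, 0, ?_, rfl⟩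
    rw [hv₂def, List.replicate_succ', ← List.append_assoc]
  have hnot : (v₁, [(0 : Fin 2)]) ∉ R₅ := by
    rintro ⟨u, y, hu, hy⟩
    have hy0 : y = 0 := by
      have := (List.cons.injEq _ _ _ _).mp hy
      exact this.1.symm
    rw [hv₁def] at hu
    have hrev := congrArg List.reverse hu
    rw [List.reverse_append, List.reverse_append] at hrev
    simp only [List.reverse_cons, List.reverse_nil, List.nil_append,
      List.singleton_append, List.cons_append] at hrev
    have h1y : (1 : Fin 2) = y := ((List.cons.injEq _ _ _ _).mp hrev).1
    rw [hy0] at h1y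
    exact absurd h1y (by decide)
  have hub := (hC v₁ [0]).2 hnot
  have hlb := (hC v₂ [0]).1 hmem
  rw [QTaux.prob_eq] at hub hlb
  -- accumulated acceptance changes little
  have hbase : QTaux.base T v₂ 0
      ≤ QTaux.base T v₁ 0 + (‖QTaux.rho T v₁‖^2 - ‖QTaux.rho T v₂‖^2) := by
    have hM := QTaux.M_mono T v₁ (List.replicate n 0)
    have hb1 := QTaux.base_mono T v₁ (List.replicate n 0) 1
    rw [← hv₂def] at hM hb1
    linarith
  have hdrop : ‖QTaux.rho T v₁‖^2 - ‖QTaux.rho T v₂‖^2 ≤ δ := by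
    rw [hrho2]
    have := hβn n
    rw [← hxdef]
    linarith
  have hend := QTaux.endM_lip T (QTaux.rho T v₂) (QTaux.rho T v₁) 0
  have hn1' : ‖QTaux.rho T v₂‖ ≤ 1 := QTaux.rho_norm_le_one T v₂
  have hn2' : ‖QTaux.rho T v₁‖ ≤ 1 := QTaux.rho_norm_le_one T v₁
  have hdiff : ‖QTaux.rho T v₂ - QTaux.rho T v₁‖ ≤ ε/2 := by
    rw [hrho2, ← hxdef]
    exact hclose'
  have hendB : QTaux.endM T (QTaux.rho T v₂) 0 - QTaux.endM T (QTaux.rho T v₁) 0 ≤ ε := by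
    have habs := le_trans (le_abs_self _) hend
    have hprod : (‖QTaux.rho T v₂‖ + ‖QTaux.rho T v₁‖) * ‖QTaux.rho T v₂ - QTaux.rho T v₁‖
        ≤ 2 * (ε/2) := by
      have h0' := norm_nonneg (QTaux.rho T v₂ - QTaux.rho T v₁)
      have h2' := norm_nonneg (QTaux.rho T v₂)
      have h3' := norm_nonneg (QTaux.rho T v₁)
      nlinarith
    linarith
  have final : ε ≤ δ := by linarith
  rw [hδdef] at final
  nlinarith


/-- No quantum finite state transducer computes `R₅` with an isolated
cutpoint. -/
theorem no_qfst_computes_R₅_cutpoint (Q : Type) [Fintype Q] [DecidableEq Q]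
    (T : QFST Q (Fin 2) (Fin 2)) (α : ℝ) (h0 : 0 < α) (h1 : α < 1) :
    ¬ T.ComputesCutpoint R₅ α :=
  no_qfst_computes_R₅_cutpoint' Q T α h0 h1
end

section
/- Every 1-way quantum finite automaton can be transformed into an equivalent one (accepting each input with exactly the same probability) in which the end-marker unitary V_$ acts as a permutation of the states: it suffices to duplicate each halting state q∈Q_acc∪Q_rej by a new state q', let σ swap q and q' for halting q and fix all other states, define a unitary U with U|q⟩ = Σ_p (V_$)_{qp}|σp⟩ for non-halting q and U|q⟩=|q⟩ for halting q, and replace V_‡ by U·V_‡, V_$ by σ, and each V_a by U·V_a·U⁻¹. -/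
/-!  1-way quantum finite automata (Kondacs–Watrous measure-many model). -/

section QFAdefs

variable {Q σ : Type*}

/-- A 1-way (measure-many) quantum finite automaton: unitaries for every
letter and for the begin/end markers, an initial state, and disjoint sets of
accepting and rejecting states. -/
structure QFA (Q σ : Type*) [Fintype Q] [DecidableEq Q] where
  V : σ → Matrix Q Q ℂ
  Vbeg : Matrix Q Q ℂ
  Vend : Matrix Q Q ℂ
  init : Q
  acc : Finset Q
  rej : Finset Q
  acc_disj_rej : Disjoint acc rej
  unitary : ∀ a, V a ∈ Matrix.unitaryGroup Q ℂ
  unitaryBeg : Vbeg ∈ Matrix.unitaryGroup Q ℂ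
  unitaryEnd : Vend ∈ Matrix.unitaryGroup Q ℂ

variable [Fintype Q] [DecidableEq Q]

/-- Accumulated probability of halting in a state of `halt`: after each
unitary the measurement (non-halting ⊕ accepting ⊕ rejecting) is performed,
the probability of the outcome `halt` is accumulated, and only the
non-halting part of the superposition survives. -/
noncomputable def qfaAux (halt non : Finset Q) : List (Matrix Q Q ℂ) → (Q → ℂ) → ℝ → ℝ
  | [], _, P => P
  | M :: rest, ψ, P =>
      qfaAux halt non rest (fun p => if p ∈ non then ∑ q, ψ q * M q p else 0)
        (P + ∑ p ∈ halt, ‖∑ q, ψ q * M q p‖ ^ 2)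

/-- The list of unitaries applied on input `‡ v $`. -/
def QFA.letters (M : QFA Q σ) (v : List σ) : List (Matrix Q Q ℂ) :=
  M.Vbeg :: (v.map M.V) ++ [M.Vend]

/-- Probability that the automaton accepts the input word `v`. -/
noncomputable def QFA.accProb (M : QFA Q σ) (v : List σ) : ℝ :=
  qfaAux M.acc (Finset.univ \ (M.acc ∪ M.rej)) (M.letters v)
    (fun q => if q = M.init then 1 else 0) 0

/-- Probability that the automaton rejects the input word `v`. -/
noncomputable def QFA.rejProb (M : QFA Q σ) (v : List σ) : ℝ :=
  qfaAux M.rej (Finset.univ \ (M.acc ∪ M.rej)) (M.letters v)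
    (fun q => if q = M.init then 1 else 0) 0

/-- The automaton accepts the language `L` with probability bounded away
from `1/2`. -/
def QFA.AcceptsBoundedAwayHalf (M : QFA Q σ) (L : Set (List σ)) : Prop :=
  ∃ ε > 0, ∀ v, (v ∈ L → 1/2 + ε ≤ M.accProb v) ∧ (v ∉ L → M.accProb v ≤ 1/2 - ε)

end QFAdefs

namespace QFAConstr

open Matrix Finset

variable {Q Q2 α : Type*} [Fintype Q] [DecidableEq Q] [Fintype Q2] [DecidableEq Q2]

lemma qfaAux_reindex (e : Q ≃ Q2) (halt non : Finset Q) (L : List (Matrix Q Q ℂ))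
    (ψ : Q → ℂ) (P : ℝ) :
    qfaAux (halt.map e.toEmbedding) (non.map e.toEmbedding)
      (L.map (Matrix.reindex e e)) (ψ ∘ e.symm) P = qfaAux halt non L ψ P := by
  induction L generalizing ψ P with
  | nil => simp [qfaAux]
  | cons N rest ih =>
    simp only [List.map_cons, qfaAux]
    have hsum : ∀ p : Q, ∑ q, (ψ ∘ e.symm) q * (Matrix.reindex e e N) q (e p)
        = ∑ q, ψ q * N q p := by
      intro p
      rw [← Equiv.sum_comp e (fun q => (ψ ∘ e.symm) q * (Matrix.reindex e e N) q (e p))]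
      simp [Matrix.reindex_apply, Matrix.submatrix_apply]
    have h1 : (fun p => if p ∈ non.map e.toEmbedding then
          ∑ q, (ψ ∘ e.symm) q * (Matrix.reindex e e N) q p else 0)
        = (fun p => if p ∈ non then ∑ q, ψ q * N q p else 0) ∘ e.symm := by
      funext p
      obtain ⟨p, rfl⟩ : ∃ p', p = e p' := ⟨e.symm p, (e.apply_symm_apply p).symm⟩
      simp only [Finset.mem_map_equiv, Function.comp_apply, e.symm_apply_apply]
      by_cases h : p ∈ non
      · simp only [h, if_true]
        simpa using hsum p
      · simp [h]
    have h2 : ∑ p ∈ halt.map e.toEmbedding,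
          ‖∑ q, (ψ ∘ e.symm) q * (Matrix.reindex e e N) q p‖ ^ 2
        = ∑ p ∈ halt, ‖∑ q, ψ q * N q p‖ ^ 2 := by
      rw [Finset.sum_map]
      exact Finset.sum_congr rfl fun p _ => by rw [Equiv.coe_toEmbedding, hsum]
    rw [h1, h2, ih]

lemma reindex_unitary (e : Q ≃ Q2) {A : Matrix Q Q ℂ} (hA : A ∈ Matrix.unitaryGroup Q ℂ) :
    Matrix.reindex e e A ∈ Matrix.unitaryGroup Q2 ℂ := by
  rw [Matrix.mem_unitaryGroup_iff] at hA ⊢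
  have h2 : star (A.submatrix ⇑e.symm ⇑e.symm) = (star A).submatrix ⇑e.symm ⇑e.symm := by
    simp [Matrix.star_eq_conjTranspose, Matrix.conjTranspose_submatrix]
  rw [Matrix.reindex_apply, h2, Matrix.submatrix_mul_equiv A (star A) _ e.symm _, hA,
    Matrix.submatrix_one_equiv]

def QFA.reindexE (e : Q ≃ Q2) (M : QFA Q α) : QFA Q2 α where
  V a := Matrix.reindex e e (M.V a)
  Vbeg := Matrix.reindex e e M.Vbeg
  Vend := Matrix.reindex e e M.Vend
  init := e M.init
  acc := M.acc.map e.toEmbedding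
  rej := M.rej.map e.toEmbedding
  acc_disj_rej := Finset.disjoint_map _ |>.2 M.acc_disj_rej
  unitary a := reindex_unitary e (M.unitary a)
  unitaryBeg := reindex_unitary e M.unitaryBeg
  unitaryEnd := reindex_unitary e M.unitaryEnd

lemma reindexE_accProb (e : Q ≃ Q2) (M : QFA Q α) (v : List α) :
    (QFA.reindexE e M).accProb v = M.accProb v ∧
    (QFA.reindexE e M).rejProb v = M.rejProb v := by
  have hletters : (QFA.reindexE e M).letters v = (M.letters v).map (Matrix.reindex e e) := by
    simp [QFA.letters, QFA.reindexE, List.map_map]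
  have hnon : (Finset.univ \ (M.acc ∪ M.rej)).map e.toEmbedding
      = Finset.univ \ ((QFA.reindexE e M).acc ∪ (QFA.reindexE e M).rej) := by
    ext x
    simp [QFA.reindexE, Finset.mem_map_equiv, Finset.mem_sdiff]
  have hinit : (fun q => if q = (QFA.reindexE e M).init then (1:ℂ) else 0)
      = (fun q => if q = M.init then (1:ℂ) else 0) ∘ e.symm := by
    funext q
    simp only [Function.comp_apply, QFA.reindexE]
    congr 1
    simp [eq_iff_iff, Equiv.symm_apply_eq]
  constructor
  · rw [QFA.accProb, QFA.accProb, hletters, hinit, ← hnon,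
      show (QFA.reindexE e M).acc = M.acc.map e.toEmbedding from rfl, qfaAux_reindex]
  · rw [QFA.rejProb, QFA.rejProb, hletters, hinit, ← hnon,
      show (QFA.reindexE e M).rej = M.rej.map e.toEmbedding from rfl, qfaAux_reindex]


/- ==================== the construction ==================== -/

variable (M : QFA Q α)

/-- halting states of `M` -/
def halt : Finset Q := M.acc ∪ M.rej

/-- the enlarged state space: `Q` plus a duplicate of every halting state -/
abbrev Qp := Q ⊕ {q // q ∈ halt M}

/-- the swap of each halting state with its duplicate -/
def sw : Qp M → Qp M
  | Sum.inl q => if h : q ∈ halt M then Sum.inr ⟨q, h⟩ else Sum.inl q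
  | Sum.inr h => Sum.inl h.1

lemma sw_inl_halt {q : Q} (h : q ∈ halt M) : sw M (Sum.inl q) = Sum.inr ⟨q, h⟩ := by
  simp [sw, h]

lemma sw_inl_non {q : Q} (h : q ∉ halt M) : sw M (Sum.inl q) = Sum.inl q := by
  simp [sw, h]

@[simp] lemma sw_inr (h : {q // q ∈ halt M}) : sw M (Sum.inr h) = Sum.inl h.1 := rfl

lemma sw_invol : Function.Involutive (sw M) := by
  rintro (q | ⟨q, h⟩)
  · by_cases h : q ∈ halt M
    · rw [sw_inl_halt M h, sw_inr]
    · rw [sw_inl_non M h, sw_inl_non M h]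
  · rw [sw_inr, sw_inl_halt M h]

/-- the embedding `Q ↪ Qp` -/
def inlE : Q ↪ Qp M := ⟨Sum.inl, Sum.inl_injective⟩

/-- halting states inside `Qp` -/
def haltF : Finset (Qp M) := (halt M).map (inlE M)

@[simp] lemma inl_mem_haltF {q : Q} : (Sum.inl q : Qp M) ∈ haltF M ↔ q ∈ halt M := by
  simp [haltF, inlE]

@[simp] lemma inr_mem_haltF (h : {q // q ∈ halt M}) : (Sum.inr h : Qp M) ∉ haltF M := by
  simp [haltF, inlE]

/-- projection back to `Q` -/
def gQ : Qp M → Q := Sum.elim id Subtype.val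

lemma gQ_inj {x x' : Qp M} (hx : x ∉ haltF M) (hx' : x' ∉ haltF M)
    (h : gQ M x = gQ M x') : x = x' := by
  match x, x' with
  | Sum.inl q, Sum.inl q' => simp_all [gQ]
  | Sum.inl q, Sum.inr h' =>
    exfalso; apply hx; rw [inl_mem_haltF]
    have hq : q = h'.1 := by simpa [gQ] using h
    exact hq ▸ h'.2
  | Sum.inr h', Sum.inl q =>
    exfalso; apply hx'; rw [inl_mem_haltF]
    have hq : h'.1 = q := by simpa [gQ] using h
    exact hq ▸ h'.2
  | Sum.inr h', Sum.inr h'' => exact congrArg Sum.inr (Subtype.ext (by simpa [gQ] using h))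

/-- the unitary `U` -/
def Umat : Matrix (Qp M) (Qp M) ℂ := fun x y =>
  if x ∈ haltF M then (if y = x then 1 else 0)
  else Sum.elim (fun p => M.Vend (gQ M x) p) (fun _ => 0) (sw M y)

lemma elim_sw_halt (f : Q → ℂ) {x : Qp M} (hx : x ∈ haltF M) :
    Sum.elim f (fun _ => (0:ℂ)) (sw M x) = 0 := by
  obtain ⟨q, hq, rfl⟩ := Finset.mem_map.1 hx
  rw [show (inlE M) q = Sum.inl q from rfl, sw_inl_halt M hq, Sum.elim_inr]

lemma Vend_mul_star : M.Vend * star M.Vend = 1 :=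
  Matrix.mem_unitaryGroup_iff.1 M.unitaryEnd

lemma U_mul_star : Umat M * star (Umat M) = 1 := by
  ext x x'
  rw [Matrix.mul_apply]
  by_cases hx : x ∈ haltF M <;> by_cases hx' : x' ∈ haltF M
  · have hterm : ∀ y, Umat M x y * star (Umat M) y x'
        = if y = x then star (Umat M x' y) else 0 := by
      intro y
      simp [Umat, hx, Matrix.star_apply, ite_mul]
    rw [Finset.sum_congr rfl fun y _ => hterm y, Finset.sum_ite_eq' Finset.univ x]
    simp only [Finset.mem_univ, if_true, Umat, hx', Matrix.one_apply]
    by_cases hxx : x = x' <;> simp [hxx, eq_comm]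
  · have hterm : ∀ y, Umat M x y * star (Umat M) y x'
        = if y = x then star (Umat M x' y) else 0 := by
      intro y
      simp [Umat, hx, Matrix.star_apply, ite_mul]
    rw [Finset.sum_congr rfl fun y _ => hterm y, Finset.sum_ite_eq' Finset.univ x]
    have : Umat M x' x = 0 := by
      simp only [Umat, if_neg hx']
      exact elim_sw_halt M _ hx
    have hne : x ≠ x' := fun h => hx' (h ▸ hx)
    simp [this, Matrix.one_apply, hne]
  · have hterm : ∀ y, Umat M x y * star (Umat M) y x'
        = Umat M x y * (if y = x' then 1 else 0) := by
      intro y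
      simp [Umat, hx', Matrix.star_apply, apply_ite (star : ℂ → ℂ)]
    rw [Finset.sum_congr rfl fun y _ => hterm y]
    simp only [mul_ite, mul_one, mul_zero, Finset.sum_ite_eq' Finset.univ x',
      Finset.mem_univ, if_true]
    have : Umat M x x' = 0 := by
      simp only [Umat, if_neg hx]
      exact elim_sw_halt M _ hx'
    have hne : x ≠ x' := fun h => hx (h ▸ hx')
    simp [this, Matrix.one_apply, hne]
  · have hterm : ∀ y, Umat M x y * star (Umat M) y x'
        = (fun z => Sum.elim (fun p => M.Vend (gQ M x) p) (fun _ => 0) z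
            * star (Sum.elim (fun p => M.Vend (gQ M x') p) (fun _ => 0) z)) (sw M y) := by
      intro y
      simp [Umat, hx, hx', Matrix.star_apply]
    rw [Finset.sum_congr rfl fun y _ => hterm y]
    rw [show ∑ y : Qp M, (fun z => Sum.elim (fun p => M.Vend (gQ M x) p) (fun _ => 0) z
            * star (Sum.elim (fun p => M.Vend (gQ M x') p) (fun _ => 0) z)) (sw M y)
      = ∑ y : Qp M, Sum.elim (fun p => M.Vend (gQ M x) p) (fun _ => 0) y
            * star (Sum.elim (fun p => M.Vend (gQ M x') p) (fun _ => 0) y) from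
      Fintype.sum_bijective (sw M) (sw_invol M).bijective _ _ (fun y => rfl)]
    rw [Fintype.sum_sum_type]
    simp only [Sum.elim_inl, Sum.elim_inr, star_zero, mul_zero, Finset.sum_const_zero,
      add_zero]
    have := congrFun (congrFun (Vend_mul_star M) (gQ M x)) (gQ M x')
    rw [Matrix.mul_apply] at this
    simp only [Matrix.star_apply] at this
    rw [this, Matrix.one_apply, Matrix.one_apply]
    by_cases h : gQ M x = gQ M x'
    · simp [h, gQ_inj M hx hx' h]
    · have : x ≠ x' := fun hh => h (hh ▸ rfl)
      simp [h, this]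

lemma U_unitary : Umat M ∈ Matrix.unitaryGroup (Qp M) ℂ :=
  Matrix.mem_unitaryGroup_iff.2 (U_mul_star M)

/-- the permutation matrix of `sw` -/
def permMat : Matrix (Qp M) (Qp M) ℂ := fun x y => if sw M x = y then 1 else 0

lemma permMat_unitary : permMat M ∈ Matrix.unitaryGroup (Qp M) ℂ := by
  rw [Matrix.mem_unitaryGroup_iff]
  ext x y
  rw [Matrix.mul_apply, Matrix.one_apply]
  have hterm : ∀ z, permMat M x z * star (permMat M) z y
      = if sw M x = z then (if sw M y = z then 1 else 0) else 0 := by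
    intro z
    by_cases h1 : sw M x = z <;> by_cases h2 : sw M y = z <;>
      simp [permMat, Matrix.star_apply, h1, h2]
  rw [Finset.sum_congr rfl fun z _ => hterm z, Finset.sum_ite_eq Finset.univ (sw M x)]
  simp only [Finset.mem_univ, if_true]
  by_cases h : x = y
  · simp [h]
  · have : sw M y ≠ sw M x := fun hh => h ((sw_invol M).injective hh).symm
    simp [h, this]

/-- extension of a matrix on `Q` by the identity on the duplicates -/
def extM (A : Matrix Q Q ℂ) : Matrix (Qp M) (Qp M) ℂ := Matrix.fromBlocks A 0 0 1

lemma extM_unitary {A : Matrix Q Q ℂ} (hA : A ∈ Matrix.unitaryGroup Q ℂ) :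
    extM M A ∈ Matrix.unitaryGroup (Qp M) ℂ := by
  rw [Matrix.mem_unitaryGroup_iff] at hA ⊢
  rw [extM, Matrix.star_eq_conjTranspose, Matrix.fromBlocks_conjTranspose,
    Matrix.fromBlocks_multiply]
  simp only [Matrix.conjTranspose_zero, Matrix.conjTranspose_one, Matrix.mul_zero,
    Matrix.zero_mul, Matrix.mul_one, Matrix.one_mul, add_zero, zero_add]
  rw [← Matrix.star_eq_conjTranspose, hA, Matrix.fromBlocks_one]

/-- the new automaton on `Qp M` -/
noncomputable def Mnew : QFA (Qp M) α where
  V a := star (Umat M) * extM M (M.V a) * Umat M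
  Vbeg := extM M M.Vbeg * Umat M
  Vend := permMat M
  init := Sum.inl M.init
  acc := M.acc.map (inlE M)
  rej := M.rej.map (inlE M)
  acc_disj_rej := (Finset.disjoint_map _).2 M.acc_disj_rej
  unitary a := mul_mem (mul_mem (Unitary.star_mem (U_unitary M)) (extM_unitary M (M.unitary a)))
    (U_unitary M)
  unitaryBeg := mul_mem (extM_unitary M M.unitaryBeg) (U_unitary M)
  unitaryEnd := permMat_unitary M

/- ==================== the simulation ==================== -/

/-- zero out the halting coordinates -/
def nr (ψ : Q → ℂ) : Q → ℂ := fun p => if p ∈ halt M then 0 else ψ p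

lemma nr_idem (ψ : Q → ℂ) : nr M (nr M ψ) = nr M ψ := by
  funext p; by_cases h : p ∈ halt M <;> simp [nr, h]

lemma nr_eq_of_support {ψ : Q → ℂ} (hψ : ∀ q ∈ halt M, ψ q = 0) : nr M ψ = ψ := by
  funext p; by_cases h : p ∈ halt M <;> simp [nr, h, hψ]

/-- embedding of a vector on `Q` into `Qp M` -/
def embv (ψ : Q → ℂ) : Qp M → ℂ := Sum.elim ψ (fun _ => 0)

/-- the image of a vector under `U` -/
noncomputable def Phi (ψ : Q → ℂ) : Qp M → ℂ := Matrix.vecMul (embv M ψ) (Umat M)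

lemma vecMul_apply' {β : Type*} [Fintype β] [DecidableEq β] (v : β → ℂ)
    (A : Matrix β β ℂ) (y : β) : Matrix.vecMul v A y = ∑ x, v x * A x y := by
  simp [Matrix.vecMul, dotProduct]

lemma Phi_inl_halt (ψ : Q → ℂ) {p : Q} (hp : p ∈ halt M) :
    Phi M ψ (Sum.inl p) = ψ p := by
  rw [Phi, vecMul_apply', Fintype.sum_sum_type]
  have h2 : ∀ h : {q // q ∈ halt M},
      embv M ψ (Sum.inr h) * Umat M (Sum.inr h) (Sum.inl p) = 0 := by
    intro h; simp [embv]
  rw [Finset.sum_congr rfl fun h _ => h2 h, Finset.sum_const_zero, add_zero]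
  have h1 : ∀ q : Q, embv M ψ (Sum.inl q) * Umat M (Sum.inl q) (Sum.inl p)
      = if q = p then ψ p else 0 := by
    intro q
    by_cases hq : q ∈ halt M
    · simp only [embv, Sum.elim_inl, Umat, inl_mem_haltF, hq, if_true]
      by_cases hqp : q = p
      · subst hqp; simp
      · have : (Sum.inl p : Qp M) ≠ Sum.inl q := fun hh => hqp (Sum.inl.inj hh).symm
        simp [hqp, this]
    · have hqp : q ≠ p := fun hh => hq (hh ▸ hp)
      simp only [embv, Sum.elim_inl, Umat, inl_mem_haltF, hq, if_false, if_neg hqp]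
      rw [sw_inl_halt M hp, Sum.elim_inr, mul_zero]
  rw [Finset.sum_congr rfl fun q _ => h1 q, Finset.sum_ite_eq' Finset.univ p]
  simp

lemma Phi_inr (ψ : Q → ℂ) (h : {q // q ∈ halt M}) :
    Phi M ψ (Sum.inr h) = ∑ p, nr M ψ p * M.Vend p h.1 := by
  rw [Phi, vecMul_apply', Fintype.sum_sum_type]
  have h2 : ∀ h' : {q // q ∈ halt M},
      embv M ψ (Sum.inr h') * Umat M (Sum.inr h') (Sum.inr h) = 0 := by
    intro h'; simp [embv]
  rw [Finset.sum_congr rfl fun h' _ => h2 h', Finset.sum_const_zero, add_zero]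
  refine Finset.sum_congr rfl fun q _ => ?_
  by_cases hq : q ∈ halt M
  · have : (Sum.inr h : Qp M) ≠ Sum.inl q := Sum.inr_ne_inl
    simp [embv, Umat, hq, nr, this]
  · simp [embv, Umat, gQ, hq, nr]

lemma Phi_inl_non (ψ : Q → ℂ) {q : Q} (hq : q ∉ halt M) :
    Phi M ψ (Sum.inl q) = ∑ p, nr M ψ p * M.Vend p q := by
  rw [Phi, vecMul_apply', Fintype.sum_sum_type]
  have h2 : ∀ h' : {q // q ∈ halt M},
      embv M ψ (Sum.inr h') * Umat M (Sum.inr h') (Sum.inl q) = 0 := by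
    intro h'; simp [embv]
  rw [Finset.sum_congr rfl fun h' _ => h2 h', Finset.sum_const_zero, add_zero]
  refine Finset.sum_congr rfl fun p _ => ?_
  by_cases hp : p ∈ halt M
  · have : (Sum.inl q : Qp M) ≠ Sum.inl p := fun hh => hq ((Sum.inl.inj hh) ▸ hp)
    simp [embv, Umat, hp, nr, this]
  · simp [embv, Umat, gQ, hp, nr, sw_inl_non M hq]

lemma haltF_eq : (Mnew M).acc ∪ (Mnew M).rej = haltF M := by
  simp only [Mnew, haltF, halt]
  exact (Finset.map_union _ _).symm

lemma Phi_restrict (φ : Q → ℂ) :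
    (fun y => if y ∈ Finset.univ \ ((Mnew M).acc ∪ (Mnew M).rej) then Phi M φ y else 0)
      = Phi M (nr M φ) := by
  funext y
  rw [haltF_eq]
  have hmem : y ∈ Finset.univ \ haltF M ↔ y ∉ haltF M := by simp
  match y with
  | Sum.inl p =>
    by_cases hp : p ∈ halt M
    · rw [if_neg (by simp [hmem, hp]), Phi_inl_halt M _ hp]
      simp [nr, hp]
    · rw [if_pos (by simp [hmem, hp]), Phi_inl_non M _ hp, Phi_inl_non M _ hp, nr_idem]
  | Sum.inr h =>
    rw [if_pos (by simp [hmem]), Phi_inr, Phi_inr, nr_idem]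

lemma embv_vecMul_ext (ψ : Q → ℂ) (N : Matrix Q Q ℂ) :
    Matrix.vecMul (embv M ψ) (extM M N) = embv M (Matrix.vecMul ψ N) := by
  funext y
  rw [vecMul_apply', Fintype.sum_sum_type]
  match y with
  | Sum.inl p =>
    simp only [embv, Sum.elim_inl, Sum.elim_inr, extM, Matrix.fromBlocks_apply₁₁,
      Matrix.fromBlocks_apply₂₁, zero_mul, mul_zero, Finset.sum_const_zero, add_zero]
    rw [vecMul_apply']
  | Sum.inr h =>
    simp [embv, extM]

lemma step (ψ : Q → ℂ) (N : Matrix Q Q ℂ) :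
    (fun y => ∑ x, Phi M ψ x * (star (Umat M) * extM M N * Umat M) x y)
      = Phi M (Matrix.vecMul ψ N) := by
  have : (fun y => ∑ x, Phi M ψ x * (star (Umat M) * extM M N * Umat M) x y)
      = Matrix.vecMul (Phi M ψ) (star (Umat M) * extM M N * Umat M) := by
    funext y; rw [vecMul_apply']
  rw [this, Phi, Matrix.vecMul_vecMul, ← Matrix.mul_assoc, ← Matrix.mul_assoc,
    U_mul_star, Matrix.one_mul, ← Matrix.vecMul_vecMul, embv_vecMul_ext,
    ← Phi]

lemma stepBeg (ψ : Q → ℂ) (N : Matrix Q Q ℂ) :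
    (fun y => ∑ x, embv M ψ x * (extM M N * Umat M) x y)
      = Phi M (Matrix.vecMul ψ N) := by
  have : (fun y => ∑ x, embv M ψ x * (extM M N * Umat M) x y)
      = Matrix.vecMul (embv M ψ) (extM M N * Umat M) := by
    funext y; rw [vecMul_apply']
  rw [this, ← Matrix.vecMul_vecMul, embv_vecMul_ext, ← Phi]

lemma permMat_vecMul (v : Qp M → ℂ) (y : Qp M) :
    ∑ x, v x * permMat M x y = v (sw M y) := by
  have hterm : ∀ x : Qp M, v x * permMat M x y = if x = sw M y then v x else 0 := by
    intro x
    by_cases h : x = sw M y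
    · subst h; simp [permMat, (sw_invol M) y]
    · have : sw M x ≠ y := fun hh => h (by rw [← hh, (sw_invol M) x])
      simp [permMat, this, h]
  rw [Finset.sum_congr rfl fun x _ => hterm x, Finset.sum_ite_eq' Finset.univ (sw M y)]
  simp

lemma nonM_eq (φ : Q → ℂ) :
    (fun p => if p ∈ Finset.univ \ (M.acc ∪ M.rej) then φ p else 0) = nr M φ := by
  funext p
  have hiff : p ∈ Finset.univ \ (M.acc ∪ M.rej) ↔ p ∉ halt M := by simp [halt]
  by_cases h : p ∈ halt M
  · rw [if_neg (fun hh => (hiff.1 hh) h), nr, if_pos h]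
  · rw [if_pos (hiff.2 h), nr, if_neg h]

lemma sim (S : Finset Q) (hS : S ⊆ halt M) (w : List α) :
    ∀ (ψ : Q → ℂ), (∀ q ∈ halt M, ψ q = 0) → ∀ P : ℝ,
    qfaAux (S.map (inlE M)) (Finset.univ \ ((Mnew M).acc ∪ (Mnew M).rej))
      (w.map (Mnew M).V ++ [(Mnew M).Vend]) (Phi M ψ) P
    = qfaAux S (Finset.univ \ (M.acc ∪ M.rej)) (w.map M.V ++ [M.Vend]) ψ P := by
  induction w with
  | nil =>
    intro ψ hψ P
    simp only [List.map_nil, List.nil_append, qfaAux]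
    congr 1
    rw [Finset.sum_map]
    refine Finset.sum_congr rfl fun p hp => ?_
    congr 1
    rw [show (inlE M) p = Sum.inl p from rfl]
    rw [show (Mnew M).Vend = permMat M from rfl]
    rw [show ∑ x, Phi M ψ x * permMat M x (Sum.inl p) = Phi M ψ (sw M (Sum.inl p)) from
      permMat_vecMul M _ _]
    rw [sw_inl_halt M (hS hp), Phi_inr, nr_eq_of_support M hψ]
  | cons a w ih =>
    intro ψ hψ P
    simp only [List.map_cons, List.cons_append, qfaAux]
    have hstep : (fun y => ∑ x, Phi M ψ x * (Mnew M).V a x y)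
        = Phi M (Matrix.vecMul ψ (M.V a)) := step M ψ (M.V a)
    have hrest : (fun y => if y ∈ Finset.univ \ ((Mnew M).acc ∪ (Mnew M).rej)
          then ∑ x, Phi M ψ x * (Mnew M).V a x y else 0)
        = Phi M (nr M (Matrix.vecMul ψ (M.V a))) := by
      rw [← Phi_restrict]
      funext y
      rw [congrFun hstep y]
    have hsum : ∑ y ∈ S.map (inlE M), ‖∑ x, Phi M ψ x * (Mnew M).V a x y‖ ^ 2
        = ∑ p ∈ S, ‖∑ q, ψ q * M.V a q p‖ ^ 2 := by
      rw [Finset.sum_map]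
      refine Finset.sum_congr rfl fun p hp => ?_
      congr 1
      rw [show (inlE M) p = Sum.inl p from rfl, congrFun hstep (Sum.inl p),
        Phi_inl_halt M _ (hS hp), vecMul_apply']
    have hrestM : (fun p => if p ∈ Finset.univ \ (M.acc ∪ M.rej)
          then ∑ q, ψ q * M.V a q p else 0) = nr M (Matrix.vecMul ψ (M.V a)) := by
      rw [← nonM_eq]
      funext p
      rw [vecMul_apply']
    rw [hrest, hsum, hrestM]
    exact ih (nr M (Matrix.vecMul ψ (M.V a))) (fun q hq => by simp [nr, hq]) _

lemma init_eq : (fun q => if q = (Mnew M).init then (1:ℂ) else 0)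
    = embv M (fun q => if q = M.init then 1 else 0) := by
  funext y
  match y with
  | Sum.inl q =>
    simp only [embv, Sum.elim_inl, Mnew]
    by_cases h : q = M.init
    · simp [h]
    · have : (Sum.inl q : Qp M) ≠ Sum.inl M.init := fun hh => h (Sum.inl.inj hh)
      simp [h, this]
  | Sum.inr h =>
    simp [embv, Mnew]

lemma Mnew_probs (v : List α) :
    (Mnew M).accProb v = M.accProb v ∧ (Mnew M).rejProb v = M.rejProb v := by
  have key : ∀ S : Finset Q, S ⊆ halt M →
      qfaAux (S.map (inlE M)) (Finset.univ \ ((Mnew M).acc ∪ (Mnew M).rej))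
        ((Mnew M).letters v) (fun q => if q = (Mnew M).init then 1 else 0) 0
      = qfaAux S (Finset.univ \ (M.acc ∪ M.rej)) (M.letters v)
        (fun q => if q = M.init then 1 else 0) 0 := by
    intro S hS
    rw [QFA.letters, QFA.letters]
    simp only [List.cons_append, qfaAux]
    have hVbeg : (fun y => ∑ x, (fun q => if q = (Mnew M).init then (1:ℂ) else 0) x
          * (Mnew M).Vbeg x y)
        = Phi M (Matrix.vecMul (fun q => if q = M.init then 1 else 0) M.Vbeg) := by
      rw [init_eq]
      exact stepBeg M _ M.Vbeg
    have hrest : (fun y => if y ∈ Finset.univ \ ((Mnew M).acc ∪ (Mnew M).rej)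
          then ∑ x, (fun q => if q = (Mnew M).init then (1:ℂ) else 0) x * (Mnew M).Vbeg x y
          else 0)
        = Phi M (nr M (Matrix.vecMul (fun q => if q = M.init then 1 else 0) M.Vbeg)) := by
      rw [← Phi_restrict]
      funext y
      rw [congrFun hVbeg y]
    have hsum : ∑ y ∈ S.map (inlE M), ‖∑ x, (fun q => if q = (Mnew M).init then (1:ℂ) else 0) x
          * (Mnew M).Vbeg x y‖ ^ 2
        = ∑ p ∈ S, ‖∑ q, (fun q => if q = M.init then (1:ℂ) else 0) q * M.Vbeg q p‖ ^ 2 := by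
      rw [Finset.sum_map]
      refine Finset.sum_congr rfl fun p hp => ?_
      congr 1
      rw [show (inlE M) p = Sum.inl p from rfl, congrFun hVbeg (Sum.inl p),
        Phi_inl_halt M _ (hS hp), vecMul_apply']
    have hrestM : (fun p => if p ∈ Finset.univ \ (M.acc ∪ M.rej)
          then ∑ q, (fun q => if q = M.init then (1:ℂ) else 0) q * M.Vbeg q p else 0)
        = nr M (Matrix.vecMul (fun q => if q = M.init then 1 else 0) M.Vbeg) := by
      rw [← nonM_eq]
      funext p
      rw [vecMul_apply']
    rw [hrest, hsum, hrestM]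
    exact sim M S hS v _ (fun q hq => by simp [nr, hq]) _
  constructor
  · have := key M.acc Finset.subset_union_left
    rw [show M.acc.map (inlE M) = (Mnew M).acc from rfl] at this
    exact this
  · have := key M.rej Finset.subset_union_right
    rw [show M.rej.map (inlE M) = (Mnew M).rej from rfl] at this
    exact this

end QFAConstr



/-- Every 1-way quantum finite automaton can be transformed into an
equivalent one — accepting and rejecting every input with exactly the same
probability — whose end-marker unitary acts as a permutation of the states.
It suffices to duplicate each halting state (so the new automaton has
`n + |Q_acc ∪ Q_rej|` states): letting `σ` swap each halting state with its
duplicate and fix all other states, and `U` be a unitary with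
`U|q⟩ = ∑_p (V_$)_{q p} |σ p⟩` for non-halting `q` and `U|q⟩ = |q⟩` for
halting `q`, one replaces `V_‡` by `U·V_‡`, `V_$` by `σ`, and each `V_a` by
`U·V_a·U⁻¹`. -/
theorem qfa_end_marker_permutation (k n : ℕ) (M : QFA (Fin n) (Fin k)) :
    ∃ (m : ℕ) (M' : QFA (Fin m) (Fin k)) (σ : Equiv.Perm (Fin m)),
      m = n + (M.acc ∪ M.rej).card ∧
      (∀ q p, M'.Vend q p = if σ q = p then 1 else 0) ∧
      (∀ v : List (Fin k), M'.accProb v = M.accProb v ∧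
        M'.rejProb v = M.rejProb v) := by
  classical
  set m : ℕ := n + (M.acc ∪ M.rej).card with hm
  have hcard : Fintype.card (QFAConstr.Qp M) = m := by
    have h1 : Fintype.card (QFAConstr.Qp M)
        = Fintype.card (Fin n) + Fintype.card {q // q ∈ QFAConstr.halt M} :=
      Fintype.card_sum
    rw [h1, Fintype.card_fin, Fintype.card_coe, QFAConstr.halt]
  let e : QFAConstr.Qp M ≃ Fin m := Fintype.equivFinOfCardEq hcard
  refine ⟨m, QFAConstr.QFA.reindexE e (QFAConstr.Mnew M),
    Equiv.permCongr e ((QFAConstr.sw_invol M).toPerm (QFAConstr.sw M)), rfl, ?_, ?_⟩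
  · intro q p
    have h1 : (QFAConstr.QFA.reindexE e (QFAConstr.Mnew M)).Vend q p
        = QFAConstr.permMat M (e.symm q) (e.symm p) := rfl
    rw [h1, QFAConstr.permMat]
    congr 1
    simp only [Equiv.permCongr_apply, Function.Involutive.coe_toPerm, eq_iff_iff]
    exact (Equiv.apply_eq_iff_eq_symm_apply e).symm
  · intro v
    have h1 := QFAConstr.reindexE_accProb e (QFAConstr.Mnew M) v
    have h2 := QFAConstr.Mnew_probs M v
    exact ⟨h1.1.trans h2.1, h1.2.trans h2.2⟩
end
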